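/- arXiv:2210.13878 — 11 statements merged into one kernel-verified Lean document; each statement's English description precedes it below -/
import Mathlib

section
/- For integers 1 ≤ s ≤ j < i ≤ n, the polynomial identity D_{i,j}(s) = x_{i,s} + ∑_{t=j+1}^{i} x_{i,t}·D_{t−1,j}(s) holds in R (where for t = j+1 the term D_{j,j}(s) equals x_{j,s}). -/
open MvPolynomial Finset

noncomputable section

/-- The polynomial ring `R = ℂ[x_{i,j}]` (we use variables indexed by pairs of naturals;
only those with `1 ≤ j ≤ i ≤ n` are relevant). -/
abbrev Rpoly : Type := MvPolynomial (ℕ × ℕ) ℂ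

/-- The extended variable `x_{i,j}`, with the conventions `x_{i,i+1} = -1` and
`x_{i,j} = 0` for `j > i + 1`. -/
def Xv (i j : ℕ) : Rpoly :=
  if j ≤ i then MvPolynomial.X (i, j) else if j = i + 1 then -1 else 0

/-- `d_{i,j}(Θ)`: the determinant of the `(i-j+1) × (i-j+1)` matrix whose `(a,b)` entry
is `x_{j+a-1, θ_b}` (rows indexed by `j, j+1, ..., i`). -/
def dPoly (i j : ℕ) (Θ : Fin (i - j + 1) → ℕ) : Rpoly :=
  Matrix.det (Matrix.of fun a b : Fin (i - j + 1) => Xv (j + a.1) (Θ b))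

/-- `D_{i,j}(s) = d_{i,j}(s, j+1, j+2, ..., i)`. -/
def DPoly (i j s : ℕ) : Rpoly :=
  dPoly i j (fun b => if b.1 = 0 then s else j + b.1)

lemma Xv_neg_one (i : ℕ) : Xv i (i + 1) = -1 := by
  rw [Xv, if_neg (by omega), if_pos rfl]

lemma Xv_zero {i j : ℕ} (h : i + 1 < j) : Xv i j = 0 := by
  rw [Xv, if_neg (by omega), if_neg (by omega)]

/-- The matrix whose determinant is `D_{j+m, j}(s)`, with clean index type. -/
def DM (j s m : ℕ) : Matrix (Fin (m + 1)) (Fin (m + 1)) Rpoly :=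
  Matrix.of fun a b => Xv (j + a.1) (if b.1 = 0 then s else j + b.1)

lemma DPoly_eq (j s m : ℕ) : DPoly (j + m) j s = (DM j s m).det := by
  have h : m + 1 = j + m - j + 1 := by omega
  rw [DPoly, dPoly, ← Matrix.det_submatrix_equiv_self (finCongr h)]
  congr 1

/-- Determinant of the triangular matrix with `-1` on the diagonal. -/
lemma det_tri (r m : ℕ) :
    (Matrix.of fun a b : Fin m => Xv (r + a.1) (r + 1 + b.1)).det = (-1) ^ m := by
  rw [Matrix.det_of_lowerTriangular]
  · calc (∏ a : Fin m, (Matrix.of fun a b : Fin m => Xv (r + a.1) (r + 1 + b.1)) a a)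
        = ∏ _a : Fin m, (-1 : Rpoly) := by
          refine Finset.prod_congr rfl fun a _ => ?_
          show Xv (r + a.1) (r + 1 + a.1) = -1
          have h : r + 1 + a.1 = (r + a.1) + 1 := by omega
          rw [h, Xv_neg_one]
      _ = (-1) ^ m := by simp
  · intro a b h
    simp only [OrderDual.toDual_lt_toDual] at h
    show Xv (r + a.1) (r + 1 + b.1) = 0
    exact Xv_zero (by have := Fin.lt_def.mp h; omega)

lemma minor_det (j s m : ℕ) (c : Fin m) :
    ((DM j s m).submatrix (Fin.last m).succAbove c.succ.succAbove).det
      = (DM j s c.1).det * (-1) ^ (m - c.1 - 1) := by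
  have hcm : c.1 < m := c.2
  have h : (c.1 + 1) + (m - (c.1 + 1)) = m := by omega
  let e : Fin (c.1 + 1) ⊕ Fin (m - (c.1 + 1)) ≃ Fin m := finSumFinEquiv.trans (finCongr h)
  have heL : ∀ a : Fin (c.1 + 1), (e (Sum.inl a)).1 = a.1 := by
    intro a; simp [e]
  have heR : ∀ a : Fin (m - (c.1 + 1)), (e (Sum.inr a)).1 = c.1 + 1 + a.1 := by
    intro a; simp [e]
  have hval : ∀ x : Fin m, (c.succ.succAbove x).1 =
      if x.1 < c.1 + 1 then x.1 else x.1 + 1 := by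
    intro x
    rw [Fin.succAbove]
    by_cases hx : x.castSucc < c.succ
    · rw [if_pos hx, if_pos (by simpa [Fin.lt_def] using hx)]
      rfl
    · rw [if_neg hx, if_neg (show ¬(x.1 < c.1 + 1) from fun h' => hx (Fin.lt_def.mpr h'))]
      rfl
  rw [← Matrix.det_submatrix_equiv_self e]
  have hblock : ((DM j s m).submatrix (Fin.last m).succAbove c.succ.succAbove).submatrix e e
      = Matrix.fromBlocks (DM j s c.1)
          0
          (Matrix.of fun (a : Fin (m - (c.1 + 1))) (d : Fin (c.1 + 1)) =>
            Xv (j + (c.1 + 1 + a.1)) (if d.1 = 0 then s else j + d.1))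
          (Matrix.of fun a b : Fin (m - (c.1 + 1)) =>
            Xv (j + (c.1 + 1) + a.1) (j + (c.1 + 1) + 1 + b.1)) := by
    ext p q : 1
    rcases p with a | a <;> rcases q with d | d <;>
      simp only [Matrix.submatrix_apply, Fin.succAbove_last, Matrix.fromBlocks_apply₁₁,
        Matrix.fromBlocks_apply₁₂, Matrix.fromBlocks_apply₂₁, Matrix.fromBlocks_apply₂₂,
        Matrix.of_apply, Matrix.zero_apply, DM, Fin.coe_castSucc]
    · -- inl inl
      rw [heL a, hval, heL d, if_pos d.2]
    · -- inl inr : zero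
      rw [heL a, hval, heR d,
        if_neg (show ¬(c.1 + 1 + d.1 < c.1 + 1) by omega),
        if_neg (show ¬(c.1 + 1 + d.1 + 1 = 0) by omega)]
      have hlt : j + a.1 + 1 < j + (c.1 + 1 + d.1 + 1) := by have := a.2; omega
      exact Xv_zero hlt
    · -- inr inl
      rw [heR a, hval, heL d, if_pos d.2]
    · -- inr inr
      rw [heR a, hval, heR d,
        if_neg (show ¬(c.1 + 1 + d.1 < c.1 + 1) by omega),
        if_neg (show ¬(c.1 + 1 + d.1 + 1 = 0) by omega),
        show j + (c.1 + 1 + a.1) = j + (c.1 + 1) + a.1 from by omega,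
        show j + (c.1 + 1 + d.1 + 1) = j + (c.1 + 1) + 1 + d.1 from by omega]
  rw [hblock, Matrix.det_fromBlocks_zero₁₂, det_tri (j + (c.1 + 1)) (m - (c.1 + 1)),
    show m - (c.1 + 1) = m - c.1 - 1 from by omega]

lemma DM_det (j s m : ℕ) :
    (DM j s m).det =
      Xv (j + m) s + ∑ b ∈ Finset.range m, Xv (j + m) (j + b + 1) * (DM j s b).det := by
  rw [show (DM j s m).det = Matrix.det (DM j s m) from rfl,
    Matrix.det_succ_row (DM j s m) (Fin.last m), Fin.sum_univ_succ]
  congr 1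
  · -- b = 0 term
    have hsub : (DM j s m).submatrix (Fin.last m).succAbove (Fin.succAbove 0)
        = Matrix.of fun a b : Fin m => Xv (j + a.1) (j + 1 + b.1) := by
      ext a b : 1
      simp only [Matrix.submatrix_apply, Fin.succAbove_last, Fin.succAbove_zero, DM,
        Matrix.of_apply, Fin.coe_castSucc, Fin.val_succ]
      rw [if_neg (show ¬(b.1 + 1 = 0) by omega),
        show j + (b.1 + 1) = j + 1 + b.1 from by omega]
    rw [hsub, det_tri]
    have hentry : DM j s m (Fin.last m) 0 = Xv (j + m) s := by
      simp [DM, Fin.last]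
    rw [hentry]
    have hv : ((Fin.last m : Fin (m+1)) : ℕ) + ((0 : Fin (m+1)) : ℕ) = m := by simp
    rw [hv]
    have hsq : ((-1 : Rpoly) ^ m) * ((-1 : Rpoly) ^ m) = 1 := by
      rw [← pow_add, show m + m = 2 * m by ring, pow_mul]; simp
    calc (-1 : Rpoly) ^ m * Xv (j + m) s * (-1) ^ m
        = Xv (j + m) s * ((-1 : Rpoly) ^ m * (-1) ^ m) := by ring
      _ = Xv (j + m) s := by rw [hsq, mul_one]
  · -- succ terms
    have hterm : ∀ c : Fin m,
        (-1 : Rpoly) ^ (((Fin.last m : Fin (m+1)) : ℕ) + ((c.succ : Fin (m+1)) : ℕ)) *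
          DM j s m (Fin.last m) c.succ *
          ((DM j s m).submatrix (Fin.last m).succAbove c.succ.succAbove).det
        = Xv (j + m) (j + c.1 + 1) * (DM j s c.1).det := by
      intro c
      have hentry : DM j s m (Fin.last m) c.succ = Xv (j + m) (j + c.1 + 1) := by
        simp only [DM, Matrix.of_apply, Fin.val_succ, Fin.val_last]
        rw [if_neg (show ¬(c.1 + 1 = 0) by omega), ← Nat.add_assoc]
      rw [hentry, minor_det]
      have hv : ((Fin.last m : Fin (m+1)) : ℕ) + ((c.succ : Fin (m+1)) : ℕ)
          = m + (c.1 + 1) := by simp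
      rw [hv]
      have hsq : ((-1 : Rpoly) ^ (m + (c.1 + 1))) * ((-1 : Rpoly) ^ (m - c.1 - 1)) = 1 := by
        rw [← pow_add, show m + (c.1 + 1) + (m - c.1 - 1) = 2 * m from by
          have := c.2; omega, pow_mul]
        simp
      calc (-1 : Rpoly) ^ (m + (c.1 + 1)) * Xv (j + m) (j + c.1 + 1) *
            ((DM j s c.1).det * (-1) ^ (m - c.1 - 1))
          = Xv (j + m) (j + c.1 + 1) * (DM j s c.1).det *
            ((-1 : Rpoly) ^ (m + (c.1 + 1)) * (-1) ^ (m - c.1 - 1)) := by ring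
        _ = _ := by rw [hsq, mul_one]
    rw [Finset.sum_congr rfl (fun c _ => hterm c)]
    exact Fin.sum_univ_eq_sum_range (fun b => Xv (j + m) (j + b + 1) * (DM j s b).det) m

/-- Lemma 2.2(i): for `1 ≤ s ≤ j < i ≤ n`,
`D_{i,j}(s) = x_{i,s} + ∑_{t=j+1}^{i} x_{i,t} D_{t-1,j}(s)`. -/
theorem stmt0 (n i j s : ℕ) (hs : 1 ≤ s) (hsj : s ≤ j) (hji : j < i) (hin : i ≤ n) :
    DPoly i j s = Xv i s + ∑ t ∈ Finset.Icc (j + 1) i, Xv i t * DPoly (t - 1) j s := by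
  obtain ⟨m, rfl⟩ : ∃ m, i = j + m := ⟨i - j, by omega⟩
  rw [DPoly_eq, DM_det]
  congr 1
  rw [← Finset.Ico_add_one_right_eq_Icc, Finset.sum_Ico_eq_sum_range,
    show j + m + 1 - (j + 1) = m from by omega]
  refine Finset.sum_congr rfl fun b _ => ?_
  rw [show j + 1 + b - 1 = j + b from by omega, DPoly_eq,
    show j + 1 + b = j + b + 1 from by omega]

end
end

section
/- For integers 1 ≤ s ≤ j < i ≤ n, the polynomial identity D_{i,j}(s) = x_{i,s} + ∑_{t=j}^{i−1} x_{t,s}·D_{i,t+1}(t+1) holds in R. -/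
open MvPolynomial Finset

noncomputable section

lemma expandRow (m : ℕ) (M : Matrix (Fin (m+2)) (Fin (m+2)) Rpoly)
    (h1 : M 0 1 = -1) (h2 : ∀ b : Fin (m+2), 2 ≤ b.1 → M 0 b = 0) :
    M.det = M 0 0 * (M.submatrix Fin.succ Fin.succ).det
      + (M.submatrix Fin.succ ((1 : Fin (m+2)).succAbove)).det := by
  rw [Matrix.det_succ_row_zero]
  rw [Fin.sum_univ_succ, Fin.sum_univ_succ]
  have hz : ∀ b : Fin m, ((-1 : Rpoly) ^ ((b.succ.succ : Fin (m+2)) : ℕ)) *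
      M 0 b.succ.succ *
      (M.submatrix Fin.succ (b.succ.succ).succAbove).det = 0 := by
    intro b
    rw [h2 b.succ.succ (by simp [Fin.val_succ])]
    ring
  rw [Finset.sum_congr rfl (fun b _ => hz b), Finset.sum_const_zero, add_zero]
  have e0 : ((0 : Fin (m+1)).succ : Fin (m+2)) = 1 := rfl
  rw [e0, h1]
  simp [Fin.succAbove_zero]

lemma succAbove_one_val (m : ℕ) (b : Fin (m+1)) :
    (((1 : Fin (m+2)).succAbove b) : ℕ) = if b.1 = 0 then 0 else b.1 + 1 := by
  by_cases hb : b.1 = 0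
  · have h : b.castSucc < (1 : Fin (m+2)) := by
      rw [Fin.lt_def]; simp [hb]
    rw [Fin.succAbove_of_castSucc_lt _ _ h]
    simp [hb]
  · have h : (1 : Fin (m+2)) ≤ b.castSucc := by
      rw [Fin.le_def]; simp; omega
    rw [Fin.succAbove_of_le_castSucc _ _ h]
    simp [hb]

lemma key (i j s : ℕ) (hji : j < i) :
    DPoly i j s = Xv j s * DPoly i (j+1) (j+1) + DPoly i (j+1) s := by
  have h : (i - (j+1) + 1) + 1 = i - j + 1 := by omega
  unfold DPoly dPoly
  rw [← Matrix.det_submatrix_equiv_self (finCongr h)]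
  rw [expandRow]
  · have e00 : ((Matrix.of fun a b : Fin (i - j + 1) =>
        Xv (j + a.1) (if b.1 = 0 then s else j + b.1)).submatrix
          (finCongr h) (finCongr h)) 0 0 = Xv j s := by
      simp [Matrix.submatrix_apply, finCongr_apply]
    have eA : ((Matrix.of fun a b : Fin (i - j + 1) =>
        Xv (j + a.1) (if b.1 = 0 then s else j + b.1)).submatrix
          (finCongr h) (finCongr h)).submatrix Fin.succ Fin.succ
        = Matrix.of (fun a b : Fin (i - (j+1) + 1) =>
            Xv (j + 1 + a.1) (if b.1 = 0 then j + 1 else j + 1 + b.1)) := by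
      funext a b
      simp only [Matrix.submatrix_apply, Matrix.of_apply, finCongr_apply, Fin.coe_cast,
        Fin.val_succ]
      rw [show j + (a.1 + 1) = j + 1 + a.1 by omega,
        show (if b.1 + 1 = 0 then s else j + (b.1 + 1))
          = (if b.1 = 0 then j + 1 else j + 1 + b.1) by
            by_cases hb : b.1 = 0 <;> simp [hb] <;> omega]
    have eB : ((Matrix.of fun a b : Fin (i - j + 1) =>
        Xv (j + a.1) (if b.1 = 0 then s else j + b.1)).submatrix
          (finCongr h) (finCongr h)).submatrix Fin.succ
            ((1 : Fin (i - (j+1) + 1 + 1)).succAbove)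
        = Matrix.of (fun a b : Fin (i - (j+1) + 1) =>
            Xv (j + 1 + a.1) (if b.1 = 0 then s else j + 1 + b.1)) := by
      funext a b
      simp only [Matrix.submatrix_apply, Matrix.of_apply, finCongr_apply, Fin.coe_cast,
        Fin.val_succ]
      rw [show j + (a.1 + 1) = j + 1 + a.1 by omega, succAbove_one_val]
      by_cases hb : b.1 = 0
      · simp [hb]
      · rw [if_neg hb, if_neg (by omega), if_neg hb,
          show j + (b.1 + 1) = j + 1 + b.1 by omega]
    rw [e00, eA, eB]
  · -- M 0 1 = -1
    simp only [Matrix.submatrix_apply, Matrix.of_apply, finCongr_apply, Fin.coe_cast,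
      Fin.val_zero, Fin.val_one]
    norm_num
    rw [Xv, if_neg (by omega), if_pos rfl]
  · intro b hb
    simp only [Matrix.submatrix_apply, Matrix.of_apply, finCongr_apply, Fin.coe_cast,
      Fin.val_zero]
    rw [if_neg (by omega), Xv, if_neg (by omega), if_neg (by omega)]


lemma DPoly_self (i s : Nat) : DPoly i i s = Xv i s := by
  unfold DPoly dPoly
  have h : (1 : Nat) = i - i + 1 := by omega
  rw [← Matrix.det_submatrix_equiv_self (finCongr h)]
  rw [Matrix.det_fin_one]
  simp [Matrix.submatrix, Fin.coe_cast]

/-- Lemma 2.2(ii): for `1 ≤ s ≤ j < i ≤ n`,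
`D_{i,j}(s) = x_{i,s} + ∑_{t=j}^{i-1} x_{t,s} D_{i,t+1}(t+1)`. -/
theorem stmt1 (n i j s : ℕ) (hs : 1 ≤ s) (hsj : s ≤ j) (hji : j < i) (hin : i ≤ n) :
    DPoly i j s = Xv i s + ∑ t ∈ Finset.Icc j (i - 1), Xv t s * DPoly i (t + 1) (t + 1) := by
  clear hs hsj hin
  induction' hd : i - j with k ih generalizing j
  · omega
  · rcases Nat.lt_or_ge (j+1) i with h | h
    · have hk : i - (j+1) = k := by omega
      rw [key i j s hji, ih (j+1) h hk]
      have hsplit : Finset.Icc j (i-1) = insert j (Finset.Icc (j+1) (i-1)) := by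
        ext x
        simp only [Finset.mem_Icc, Finset.mem_insert]
        omega
      rw [hsplit, Finset.sum_insert (by simp)]
      ring
    · have hij : i = j + 1 := by omega
      subst hij
      have hsing : Finset.Icc j (j+1-1) = {j} := by simp
      rw [key (j+1) j s hji, hsing, Finset.sum_singleton, DPoly_self, DPoly_self]
      ring

end
end

section
/- For all integers n ≥ 1 and k ∈ ℕ, ∑_{s=0}^{n−1} (−1)^{s}·C((n−s)(k+1), n)·C(n, s) = (k+1)^{n}, as an identity in ℤ, where C(p,q) denotes the binomial coefficient. -/
open Finset fwdDiff

private lemma step7 (k m n : ℕ) :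
    Δ_[1] (fun x : ℕ => ((((k+1)*x + m).choose (n+1) : ℕ) : ℤ))
      = fun x : ℕ => ∑ i ∈ Finset.range (k+1), ((((k+1)*x + m + i).choose n : ℕ) : ℤ) := by
  funext x
  simp only [fwdDiff]
  have hx : (k+1) * (x + 1) + m = ((k+1)*x + m) + (k+1) := by ring
  rw [hx]
  set y := (k+1)*x + m with hy
  have htel : ∑ i ∈ Finset.range (k+1),
      (((y + (i+1)).choose (n+1) : ℤ) - ((y + i).choose (n+1) : ℤ))
      = ((y + (k+1)).choose (n+1) : ℤ) - ((y + 0).choose (n+1) : ℤ) :=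
    Finset.sum_range_sub (fun i => ((y + i).choose (n+1) : ℤ)) (k+1)
  rw [add_zero] at htel
  rw [← htel]
  apply Finset.sum_congr rfl
  intro i _
  have : (y + (i+1)).choose (n+1) = (y + i).choose n + (y + i).choose (n+1) := by
    have : y + (i+1) = (y + i) + 1 := by ring
    rw [this, Nat.choose_succ_succ']
  rw [this]
  push_cast
  ring

private lemma diff7 (k : ℕ) : ∀ n m : ℕ,
    (Δ_[1])^[n] (fun x : ℕ => ((((k+1)*x + m).choose n : ℕ) : ℤ))
      = fun _ => ((k : ℤ) + 1) ^ n := by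
  intro n
  induction n with
  | zero => intro m; simp
  | succ n IH =>
    intro m
    rw [Function.iterate_succ_apply, step7 k m n]
    have : (fun x : ℕ => ∑ i ∈ Finset.range (k+1), ((((k+1)*x + m + i).choose n : ℕ) : ℤ))
        = ∑ i ∈ Finset.range (k+1), (fun x : ℕ => ((((k+1)*x + (m + i)).choose n : ℕ) : ℤ)) := by
      funext x
      simp [add_assoc]
    rw [this, fwdDiff_iter_finset_sum]
    funext x
    simp only [Finset.sum_apply]
    rw [Finset.sum_congr rfl (fun i _ => by rw [IH (m + i)])]
    simp [pow_succ, mul_comm]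

/-- For `n ≥ 1`, `k ∈ ℕ`:
`∑_{s=0}^{n−1} (−1)^s·C((n−s)(k+1), n)·C(n, s) = (k+1)^n` in `ℤ`. -/
theorem stmt7 (n k : ℕ) (hn : 1 ≤ n) :
    ∑ s ∈ Finset.range n,
        (-1 : ℤ) ^ s * (Nat.choose ((n - s) * (k + 1)) n : ℤ) * (Nat.choose n s : ℤ)
      = ((k : ℤ) + 1) ^ n := by
  have key := diff7 k n 0
  have h2 := fwdDiff_iter_eq_sum_shift (1 : ℕ)
    (fun x : ℕ => ((((k+1)*x + 0).choose n : ℕ) : ℤ)) n 0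
  rw [key] at h2
  have h3 : ((k : ℤ) + 1) ^ n = ∑ j ∈ Finset.range (n+1),
      ((-1 : ℤ) ^ (n - j) * (n.choose j : ℤ)) • ((((k+1)*(0 + j • 1) + 0).choose n : ℕ) : ℤ) := h2
  rw [h3,
    ← Finset.sum_range_reflect (fun j => ((-1 : ℤ) ^ (n - j) * (n.choose j : ℤ))
      • ((((k+1)*(0 + j • 1) + 0).choose n : ℕ) : ℤ)) (n+1),
    Finset.sum_range_succ]
  have hlast : ((-1 : ℤ) ^ (n - (n + 1 - 1 - n)) * (n.choose (n + 1 - 1 - n) : ℤ))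
      • ((((k+1)*(0 + (n + 1 - 1 - n) • 1) + 0).choose n : ℕ) : ℤ) = 0 := by
    have h0 : n + 1 - 1 - n = 0 := by omega
    rw [h0]
    simp [Nat.choose_eq_zero_of_lt hn]
  rw [hlast, add_zero]
  apply Finset.sum_congr rfl
  intro s hs
  have hsn : s < n := Finset.mem_range.mp hs
  have e1 : n + 1 - 1 - s = n - s := by omega
  have e2 : n - (n - s) = s := by omega
  have e3 : n.choose (n - s) = n.choose s := Nat.choose_symm (le_of_lt hsn)
  rw [e1, e2, e3]
  have e4 : (k + 1) * (0 + (n - s) • 1) + 0 = (n - s) * (k + 1) := by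
    simp [Nat.mul_comm]
  rw [e4]
  simp only [smul_eq_mul]
  ring
end

section
/- Let n ≥ 2, k_1,...,k_n ∈ ℕ, and r ∈ ℕ. Summing over all β = (β_1,...,β_n) ∈ ℕ^n with β_1 + ⋯ + β_n = r and β_i ≤ k_i for i ∈ {2,...,n} (β_1 unconstrained), one has ∑_{β} ∏_{1≤i<j≤n} ((∑_{a=i}^{j−1} k_{a+1}) + β_i − β_j + j − i)/(j − i) = C(n+r−1, n−1) · ∏_{1≤i<j≤n} ((∑_{a=i}^{j−1} k_{a+1}) + j − i)/(j − i), as an identity in ℚ. -/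
open Finset Polynomial

/-- Access a tuple `β ∈ ℕ^n` by its 1-based index (`βv β t = β_t` for `1 ≤ t ≤ n`). -/
def βv {n : ℕ} (β : Fin n → ℕ) (t : ℕ) : ℕ :=
  if h : t - 1 < n then β ⟨t - 1, h⟩ else 0



/-- signed Vandermonde product -/
def Vd {n : ℕ} (x : Fin n → ℚ) : ℚ := ∏ i, ∏ j ∈ Finset.Ioi i, (x i - x j)

lemma Vd_eq_det {n : ℕ} (x : Fin n → ℚ) :
    Vd x = Matrix.det (Matrix.vandermonde (fun i => -x i)) := by
  rw [Matrix.det_vandermonde, Vd]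
  refine Finset.prod_congr rfl fun i _ => Finset.prod_congr rfl fun j _ => ?_
  ring

lemma Vd_comp {n : ℕ} (x : Fin n → ℚ) (σ : Equiv.Perm (Fin n)) :
    Vd (x ∘ σ) = (Equiv.Perm.sign σ : ℤ) * Vd x := by
  rw [Vd_eq_det, Vd_eq_det]
  have : Matrix.vandermonde (fun i => -(x ∘ σ) i)
      = (Matrix.vandermonde fun i => -x i).submatrix σ id := rfl
  rw [this, Matrix.det_permute]

lemma Vd_swap {n : ℕ} (x : Fin n → ℚ) {i j : Fin n} (hij : i ≠ j) :
    Vd (x ∘ Equiv.swap i j) = -Vd x := by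
  rw [Vd_comp, Equiv.Perm.sign_swap hij]
  push_cast
  ring

lemma Vd_eq_zero {n : ℕ} (x : Fin n → ℚ) {i j : Fin n} (hij : i ≠ j) (h : x i = x j) :
    Vd x = 0 := by
  rw [Vd_eq_det]
  refine Matrix.det_zero_of_row_eq hij ?_
  funext m
  simp [Matrix.vandermonde, h]


lemma comp_swap_eq {n : ℕ} (c : Fin n → ℚ) (β : Fin n → ℕ) {i j : Fin n} (hc : c i = c j) :
    (fun t => c t + ((β ∘ Equiv.swap i j) t : ℚ)) = (fun t => c t + (β t : ℚ)) ∘ Equiv.swap i j := by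
  funext t
  simp only [Function.comp_apply]
  congr 1
  rcases eq_or_ne t i with rfl | hti
  · rw [Equiv.swap_apply_left, hc]
  rcases eq_or_ne t j with rfl | htj
  · rw [Equiv.swap_apply_right, hc]
  · rw [Equiv.swap_apply_of_ne_of_ne hti htj]

lemma sum_Vd_zero {n r : ℕ} (c : Fin n → ℚ) {i j : Fin n} (hij : i ≠ j) (hc : c i = c j) :
    ∑ β ∈ Finset.Nat.antidiagonalTuple n r, Vd (fun t => c t + (β t : ℚ)) = 0 := by
  refine Finset.sum_involution (fun β _ => β ∘ Equiv.swap i j) ?_ ?_ ?_ ?_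
  · intro β hβ
    rw [comp_swap_eq c β hc, Vd_swap _ hij]
    ring
  · intro β hβ hne
    intro h
    apply hne
    have hbij : β i = β j := by
      have := congrFun h i
      simpa [Equiv.swap_apply_left] using this.symm
    exact Vd_eq_zero _ hij (by simp [hc, hbij])
  · intro β hβ
    rw [Finset.Nat.mem_antidiagonalTuple] at *
    rw [← hβ]
    exact Fintype.sum_equiv (Equiv.swap i j) _ β (fun t => rfl)
  · intro β hβ
    funext t
    simp


lemma sum_adT_succ {M : Type*} [AddCommMonoid M] (n r : ℕ) (f : (Fin (n + 1) → ℕ) → M) :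
    ∑ β ∈ Finset.Nat.antidiagonalTuple (n + 1) r, f β
      = ∑ p ∈ Finset.HasAntidiagonal.antidiagonal r, ∑ g ∈ Finset.Nat.antidiagonalTuple n p.2, f (Fin.cons p.1 g) := by
  refine Eq.trans (b := ∑ x ∈ (Finset.HasAntidiagonal.antidiagonal r).sigma
      (fun p => Finset.Nat.antidiagonalTuple n p.2), f (Fin.cons x.1.1 x.2))
    ?_ (Finset.sum_sigma _ _ _)
  refine Finset.sum_nbij' (fun β => ⟨(β 0, ∑ j : Fin n, β j.succ), Fin.tail β⟩)
    (fun q => Fin.cons q.1.1 q.2) ?_ ?_ ?_ ?_ ?_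
  · intro β hβ
    rw [Finset.Nat.mem_antidiagonalTuple, Fin.sum_univ_succ] at hβ
    refine Finset.mem_sigma.mpr ⟨Finset.HasAntidiagonal.mem_antidiagonal.mpr hβ, ?_⟩
    rw [Finset.Nat.mem_antidiagonalTuple]
    rfl
  · intro q hq
    rw [Finset.mem_sigma, Finset.HasAntidiagonal.mem_antidiagonal, Finset.Nat.mem_antidiagonalTuple] at hq
    rw [Finset.Nat.mem_antidiagonalTuple, Fin.sum_univ_succ]
    simp [hq.2, hq.1]
  · intro β hβ
    exact Fin.cons_self_tail β
  · intro q hq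
    rw [Finset.mem_sigma, Finset.HasAntidiagonal.mem_antidiagonal, Finset.Nat.mem_antidiagonalTuple] at hq
    refine Sigma.ext ?_ (heq_of_eq ?_)
    · simp [hq.2]
    · simp [Fin.tail_cons]
  · intro β hβ
    rw [Fin.cons_self_tail β]


lemma Vd_one (x : Fin 1 → ℚ) : Vd x = 1 := by
  simp [Vd]

lemma Vd_succ {n : ℕ} (x : Fin (n + 2) → ℚ) :
    Vd x = (∏ j : Fin (n + 1), (x 0 - x j.succ)) * Vd (x ∘ Fin.succ) := by
  rw [Vd, Fin.prod_univ_succ]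
  congr 1
  · exact Fin.prod_Ioi_zero _
  · rw [Vd]
    exact Finset.prod_congr rfl fun i _ => Fin.prod_Ioi_succ _ i

lemma hockey (n : ℕ) : ∀ r : ℕ,
    ∑ p ∈ Finset.HasAntidiagonal.antidiagonal r, Nat.choose (n + p.2) n = Nat.choose (n + 1 + r) (n + 1) := by
  intro r
  induction r with
  | zero => simp
  | succ r IH =>
    rw [Finset.Nat.sum_antidiagonal_succ]
    simp only []
    rw [IH, show n + (r + 1) = n + 1 + r from by omega]
    exact (Nat.choose_succ_succ (n + 1 + r) n).symm

lemma key_s8 : ∀ (n : ℕ) (r : ℕ) (c : Fin (n + 1) → ℚ),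
    (∀ i j : Fin (n + 1), i ≠ 0 → j ≠ 0 → i ≠ j → c i ≠ c j) →
    ∑ β ∈ Finset.Nat.antidiagonalTuple (n + 1) r, Vd (fun t => c t + (β t : ℚ))
      = (Nat.choose (n + r) n : ℚ) * Vd c := by
  intro n
  induction n with
  | zero =>
    intro r c _
    simp [Vd_one]
  | succ n IH =>
    intro r c hc
    set d : Fin (n + 1) → ℚ := fun t => c t.succ with hd
    have hdinj : Function.Injective d := by
      intro a b hab
      by_contra hne
      exact hc a.succ b.succ (Fin.succ_ne_zero a) (Fin.succ_ne_zero b)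
        (fun h => hne (Fin.succ_injective _ h)) hab
    set P : Polynomial ℚ := ∑ β ∈ Finset.Nat.antidiagonalTuple (n + 1 + 1) r,
        (∏ j : Fin (n + 1), (X - C (d j + (β j.succ : ℚ) - (β 0 : ℚ)))) *
          C (Vd fun t => d t + (β t.succ : ℚ)) with hP
    set Q : Polynomial ℚ := C ((Nat.choose (n + 1 + r) (n + 1) : ℚ)) *
        ((∏ j : Fin (n + 1), (X - C (d j))) * C (Vd d)) with hQ
    have hPeval : ∀ z : ℚ, P.eval z
        = ∑ β ∈ Finset.Nat.antidiagonalTuple (n + 1 + 1) r,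
            Vd (fun t => (Fin.cons z d : Fin (n + 1 + 1) → ℚ) t + (β t : ℚ)) := by
      intro z
      rw [hP, Polynomial.eval_finset_sum]
      refine Finset.sum_congr rfl fun β _ => ?_
      rw [Vd_succ (fun t => (Fin.cons z d : Fin (n + 1 + 1) → ℚ) t + (β t : ℚ))]
      have h2 : ((fun t => (Fin.cons z d : Fin (n + 1 + 1) → ℚ) t + (β t : ℚ)) ∘ Fin.succ)
          = fun t => d t + (β t.succ : ℚ) := by
        funext t; simp [hd]
      rw [h2, Polynomial.eval_mul, Polynomial.eval_prod, Polynomial.eval_C]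
      congr 1
      refine Finset.prod_congr rfl fun j _ => ?_
      simp only [Polynomial.eval_sub, Polynomial.eval_X, Polynomial.eval_C, Fin.cons_zero,
        Fin.cons_succ]
      ring
    have hQeval : ∀ z : ℚ, Q.eval z
        = (Nat.choose (n + 1 + r) (n + 1) : ℚ) * Vd (Fin.cons z d : Fin (n + 1 + 1) → ℚ) := by
      intro z
      rw [hQ, Vd_succ (Fin.cons z d : Fin (n + 1 + 1) → ℚ)]
      have h2 : ((Fin.cons z d : Fin (n + 1 + 1) → ℚ) ∘ Fin.succ) = d := by
        funext t; simp
      rw [h2]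
      simp only [Polynomial.eval_mul, Polynomial.eval_C, Polynomial.eval_prod,
        Polynomial.eval_sub, Polynomial.eval_X, Fin.cons_zero, Fin.cons_succ]
    have hmon : ∀ β : Fin (n + 1 + 1) → ℕ,
        (∏ j : Fin (n + 1), (X - C (d j + (β j.succ : ℚ) - (β 0 : ℚ)))).Monic :=
      fun β => monic_prod_of_monic _ _ fun j _ => monic_X_sub_C _
    have hmondeg : ∀ β : Fin (n + 1 + 1) → ℕ,
        (∏ j : Fin (n + 1), (X - C (d j + (β j.succ : ℚ) - (β 0 : ℚ)))).natDegree = n + 1 := by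
      intro β
      rw [Polynomial.natDegree_prod_of_monic _ _ fun j _ => monic_X_sub_C _]
      simp only [Polynomial.natDegree_X_sub_C, Finset.sum_const, Finset.card_univ,
        Fintype.card_fin, smul_eq_mul, mul_one]
    have hmon2 : (∏ j : Fin (n + 1), (X - C (d j))).Monic :=
      monic_prod_of_monic _ _ fun j _ => monic_X_sub_C _
    have hmondeg2 : (∏ j : Fin (n + 1), (X - C (d j))).natDegree = n + 1 := by
      rw [Polynomial.natDegree_prod_of_monic _ _ fun j _ => monic_X_sub_C _]
      simp only [Polynomial.natDegree_X_sub_C, Finset.sum_const, Finset.card_univ,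
        Fintype.card_fin, smul_eq_mul, mul_one]
    have hPcoeff : P.coeff (n + 1)
        = ∑ β ∈ Finset.Nat.antidiagonalTuple (n + 1 + 1) r,
            Vd (fun t => d t + (β t.succ : ℚ)) := by
      rw [hP, Polynomial.finset_sum_coeff]
      refine Finset.sum_congr rfl fun β _ => ?_
      have h1 := (hmon β).coeff_natDegree
      rw [hmondeg β] at h1
      rw [Polynomial.coeff_mul_C, h1, one_mul]
    have hQcoeff : Q.coeff (n + 1) = (Nat.choose (n + 1 + r) (n + 1) : ℚ) * Vd d := by
      have h1 := hmon2.coeff_natDegree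
      rw [hmondeg2] at h1
      rw [hQ, Polynomial.coeff_C_mul, Polynomial.coeff_mul_C, h1, one_mul]
    have hsum : ∑ β ∈ Finset.Nat.antidiagonalTuple (n + 1 + 1) r,
        Vd (fun t => d t + (β t.succ : ℚ))
        = (Nat.choose (n + 1 + r) (n + 1) : ℚ) * Vd d := by
      rw [sum_adT_succ (n + 1) r (fun β => Vd (fun t => d t + (β t.succ : ℚ)))]
      have h3 : ∀ p : ℕ × ℕ, p ∈ Finset.HasAntidiagonal.antidiagonal r →
          ∑ g ∈ Finset.Nat.antidiagonalTuple (n + 1) p.2,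
            Vd (fun t => d t + (((Fin.cons p.1 g : Fin (n + 1 + 1) → ℕ)) t.succ : ℚ))
          = (Nat.choose (n + p.2) n : ℚ) * Vd d := by
        intro p _
        have h4 : ∀ g : Fin (n + 1) → ℕ,
            (fun t => d t + (((Fin.cons p.1 g : Fin (n + 1 + 1) → ℕ)) t.succ : ℚ))
              = fun t => d t + (g t : ℚ) := by
          intro g; funext t; simp
        rw [Finset.sum_congr rfl fun g _ => by rw [h4 g]]
        exact IH p.2 d fun i j _ _ hij => fun h => hij (hdinj h)
      rw [Finset.sum_congr rfl h3, ← Finset.sum_mul]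
      congr 1
      rw [← Nat.cast_sum]
      rw [hockey n r]
    have hPdeg : P.natDegree ≤ n + 1 := by
      rw [hP]
      refine Polynomial.natDegree_sum_le_of_forall_le _ _ fun β _ => ?_
      refine le_trans (Polynomial.natDegree_mul_le) ?_
      rw [hmondeg β, Polynomial.natDegree_C]
    have hQdeg : Q.natDegree ≤ n + 1 := by
      rw [hQ]
      refine le_trans Polynomial.natDegree_mul_le (le_trans (add_le_add
        (le_of_eq (Polynomial.natDegree_C _)) Polynomial.natDegree_mul_le) ?_)
      rw [hmondeg2, Polynomial.natDegree_C]
      omega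
    have hDdeg : (P - Q).natDegree ≤ n := by
      rw [Polynomial.natDegree_le_iff_coeff_eq_zero]
      intro N hN
      rcases eq_or_lt_of_le (Nat.succ_le_of_lt hN) with h | h
      · rw [Polynomial.coeff_sub, ← h, hPcoeff, hQcoeff, hsum, sub_self]
      · rw [Polynomial.coeff_sub,
          Polynomial.coeff_eq_zero_of_natDegree_lt (lt_of_le_of_lt hPdeg h),
          Polynomial.coeff_eq_zero_of_natDegree_lt (lt_of_le_of_lt hQdeg h), sub_self]
    have hD : P - Q = 0 := by
      refine Polynomial.eq_zero_of_natDegree_lt_card_of_eval_eq_zero (P - Q) hdinj ?_ ?_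
      · intro m
        rw [Polynomial.eval_sub, hPeval, hQeval]
        have hij : (0 : Fin (n + 1 + 1)) ≠ m.succ := (Fin.succ_ne_zero m).symm
        have hcc : (Fin.cons (d m) d : Fin (n + 1 + 1) → ℚ) 0
            = (Fin.cons (d m) d : Fin (n + 1 + 1) → ℚ) m.succ := by simp
        rw [sum_Vd_zero _ hij hcc, Vd_eq_zero _ hij hcc, mul_zero, sub_zero]
      · refine lt_of_le_of_lt hDdeg ?_
        simp [Fintype.card_fin]
    have hPQ : P = Q := sub_eq_zero.mp hD
    have h0 : (Fin.cons (c 0) d : Fin (n + 1 + 1) → ℚ) = c := Fin.cons_self_tail c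
    have e1 := hPeval (c 0)
    have e2 := hQeval (c 0)
    rw [h0] at e1 e2
    rw [← e1, hPQ, e2]


/-- set of violated positions -/
def Tset (k : ℕ → ℕ) {n : ℕ} (β : Fin n → ℕ) : Finset (Fin n) :=
  Finset.univ.filter (fun p => 0 < p.val ∧ k (p.val + 1) < β p)

lemma mem_Tset {k : ℕ → ℕ} {n : ℕ} {β : Fin n → ℕ} {p : Fin n} :
    p ∈ Tset k β ↔ 0 < p.val ∧ k (p.val + 1) < β p := by
  simp [Tset]

/-- the predecessor index -/
def pre {n : ℕ} (t : Fin n) : Fin n :=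
  ⟨t.val - 1, lt_of_le_of_lt (Nat.sub_le _ _) t.isLt⟩

lemma pre_ne {n : ℕ} (t : Fin n) (h0 : 0 < t.val) : pre t ≠ t := by
  intro h
  have := congrArg Fin.val h
  simp [pre] at this
  omega

/-- reflection at position t -/
def flipAt (k : ℕ → ℕ) {n : ℕ} (t : Fin n) (β : Fin n → ℕ) : Fin n → ℕ :=
  Function.update (Function.update β (pre t) (β t - (k (t.val + 1) + 1))) t
    (β (pre t) + k (t.val + 1) + 1)

lemma flipAt_apply_t (k : ℕ → ℕ) {n : ℕ} (t : Fin n) (β : Fin n → ℕ) :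
    flipAt k t β t = β (pre t) + k (t.val + 1) + 1 := by
  simp [flipAt]

lemma flipAt_apply_pre (k : ℕ → ℕ) {n : ℕ} (t : Fin n) (β : Fin n → ℕ) (h0 : 0 < t.val) :
    flipAt k t β (pre t) = β t - (k (t.val + 1) + 1) := by
  rw [flipAt, Function.update_of_ne (pre_ne t h0), Function.update_self]

lemma flipAt_apply_other (k : ℕ → ℕ) {n : ℕ} (t : Fin n) (β : Fin n → ℕ) {p : Fin n}
    (hp : p ≠ t) (hp1 : p ≠ pre t) : flipAt k t β p = β p := by
  rw [flipAt, Function.update_of_ne hp, Function.update_of_ne hp1]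

lemma flipAt_sum (k : ℕ → ℕ) {n : ℕ} (t : Fin n) (β : Fin n → ℕ) (h0 : 0 < t.val)
    (hk : k (t.val + 1) + 1 ≤ β t) : ∑ p, flipAt k t β p = ∑ p, β p := by
  have ht : t ∈ (Finset.univ : Finset (Fin n)) := Finset.mem_univ t
  have ht1 : pre t ∈ Finset.univ \ {t} := by
    simp [pre_ne t h0]
  have ht2 : pre t ∈ Finset.univ.erase t := by
    simp [pre_ne t h0]
  rw [flipAt, Finset.sum_update_of_mem ht, Finset.sum_update_of_mem ht1]
  conv_rhs => rw [← Finset.sum_erase_add _ β ht, ← Finset.sum_erase_add _ β ht2]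
  simp only [Finset.sdiff_singleton_eq_erase]
  omega

lemma flipAt_comp (k : ℕ → ℕ) {n : ℕ} (c : Fin n → ℚ) (t : Fin n) (β : Fin n → ℕ)
    (h0 : 0 < t.val) (hk : k (t.val + 1) + 1 ≤ β t)
    (hgap : c (pre t) = c t + (k (t.val + 1) : ℚ) + 1) :
    (fun p => c p + (flipAt k t β p : ℚ)) = (fun p => c p + (β p : ℚ)) ∘ Equiv.swap (pre t) t := by
  funext p
  simp only [Function.comp_apply]
  rcases eq_or_ne p (pre t) with rfl | hp1
  · rw [Equiv.swap_apply_left, flipAt_apply_pre k t β h0, hgap]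
    push_cast [Nat.cast_sub hk]
    ring
  rcases eq_or_ne p t with rfl | hp
  · rw [Equiv.swap_apply_right, flipAt_apply_t, hgap]
    push_cast
    ring
  · rw [Equiv.swap_apply_of_ne_of_ne hp1 hp, flipAt_apply_other k t β hp hp1]

lemma flipAt_flipAt (k : ℕ → ℕ) {n : ℕ} (t : Fin n) (β : Fin n → ℕ) (h0 : 0 < t.val)
    (hk : k (t.val + 1) + 1 ≤ β t) : flipAt k t (flipAt k t β) = β := by
  funext p
  rcases eq_or_ne p (pre t) with rfl | hp1
  · rw [flipAt_apply_pre k t _ h0, flipAt_apply_t]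
    omega
  rcases eq_or_ne p t with rfl | hp
  · rw [flipAt_apply_t, flipAt_apply_pre _ _ _ h0]
    omega
  · rw [flipAt_apply_other k t _ hp hp1, flipAt_apply_other k t β hp hp1]

def flipV (k : ℕ → ℕ) {n : ℕ} (β : Fin n → ℕ) : Fin n → ℕ :=
  if h : (Tset k β).Nonempty then flipAt k ((Tset k β).max' h) β else β

lemma violSum (n r : ℕ) (k : ℕ → ℕ) (c : Fin n → ℚ)
    (hgap : ∀ t : Fin n, 0 < t.val → c (pre t) = c t + (k (t.val + 1) : ℚ) + 1) :
    ∑ β ∈ (Finset.Nat.antidiagonalTuple n r).filter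
        (fun β => ¬ ∀ p : Fin n, 0 < p.val → β p ≤ k (p.val + 1)),
      Vd (fun t => c t + (β t : ℚ)) = 0 := by
  classical
  have hne : ∀ β : Fin n → ℕ,
      (¬ ∀ p : Fin n, 0 < p.val → β p ≤ k (p.val + 1)) → (Tset k β).Nonempty := by
    intro β h
    push_neg at h
    obtain ⟨p, hp0, hpk⟩ := h
    exact ⟨p, mem_Tset.mpr ⟨hp0, hpk⟩⟩
  have main : ∀ β : Fin n → ℕ, (¬ ∀ p : Fin n, 0 < p.val → β p ≤ k (p.val + 1)) →
      ∃ t : Fin n, 0 < t.val ∧ k (t.val + 1) < β t ∧ flipV k β = flipAt k t β ∧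
        (∀ p ∈ Tset k β, p ≤ t) := by
    intro β h
    have h' := hne β h
    refine ⟨(Tset k β).max' h', ?_, ?_, ?_, ?_⟩
    · exact (mem_Tset.mp ((Tset k β).max'_mem h')).1
    · exact (mem_Tset.mp ((Tset k β).max'_mem h')).2
    · rw [flipV, dif_pos h']
    · exact fun p hp => Finset.le_max' _ p hp
  refine Finset.sum_involution (fun β _ => flipV k β) ?_ ?_ ?_ ?_
  · intro β hβ
    obtain ⟨t, ht0, htk, hfl, _⟩ := main β (Finset.mem_filter.mp hβ).2
    beta_reduce
    rw [hfl, flipAt_comp k c t β ht0 htk (hgap t ht0), Vd_swap _ (pre_ne t ht0)]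
    ring
  · intro β hβ hf0 hflβ
    beta_reduce at hflβ
    obtain ⟨t, ht0, htk, hfl, _⟩ := main β (Finset.mem_filter.mp hβ).2
    have h2 := flipAt_comp k c t β ht0 htk (hgap t ht0)
    rw [← hfl, hflβ] at h2
    have h3 : Vd (fun p => c p + (β p : ℚ))
        = -Vd (fun p => c p + (β p : ℚ)) := by
      rw [← Vd_swap _ (pre_ne t ht0), ← h2]
    apply hf0
    linarith
  · intro β hβ
    obtain ⟨hmem, hviol⟩ := Finset.mem_filter.mp hβ
    obtain ⟨t, ht0, htk, hfl, _⟩ := main β hviol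
    beta_reduce
    rw [hfl]
    refine Finset.mem_filter.mpr ⟨?_, ?_⟩
    · rw [Finset.Nat.mem_antidiagonalTuple] at *
      rw [flipAt_sum k t β ht0 htk, hmem]
    · push_neg
      exact ⟨t, ht0, by rw [flipAt_apply_t]; omega⟩
  · intro β hβ
    obtain ⟨hmem, hviol⟩ := Finset.mem_filter.mp hβ
    obtain ⟨t, ht0, htk, hfl, hmax⟩ := main β hviol
    beta_reduce
    rw [hfl]
    have hviol2 : ¬ ∀ p : Fin n, 0 < p.val → flipAt k t β p ≤ k (p.val + 1) := by
      push_neg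
      exact ⟨t, ht0, by rw [flipAt_apply_t]; omega⟩
    obtain ⟨t', ht0', htk', hfl', hmax'⟩ := main (flipAt k t β) hviol2
    rw [hfl']
    have htt : t' = t := by
      refine le_antisymm ?_ ?_
      · -- t' ≤ t
        by_contra hgt
        push_neg at hgt
        have hp : t' ≠ t := by intro h; rw [h] at hgt; exact lt_irrefl _ hgt
        have hp1 : t' ≠ pre t := by
          intro h
          have : (t' : ℕ) = t.val - 1 := congrArg Fin.val h
          have := Fin.lt_def.mp hgt
          omega
        have := flipAt_apply_other k t β hp hp1
        rw [this] at htk'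
        exact absurd (hmax t' (mem_Tset.mpr ⟨ht0', htk'⟩)) (not_le.mpr hgt)
      · refine hmax' t (mem_Tset.mpr ⟨ht0, ?_⟩)
        rw [flipAt_apply_t]
        omega
    rw [htt]
    exact flipAt_flipAt k t β ht0 htk


def cdef (m : ℕ) (k : ℕ → ℕ) : Fin (m + 1) → ℚ :=
  fun p => (∑ a ∈ Finset.Icc (p.val + 2) (m + 1), (k a : ℚ)) + ((m : ℚ) - (p.val : ℚ))

lemma cdef_sub {m : ℕ} {k : ℕ → ℕ} {p q : Fin (m + 1)} (hpq : p < q) :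
    cdef m k p - cdef m k q
      = (∑ a ∈ Finset.Icc (p.val + 2) (q.val + 1), (k a : ℚ)) + ((q.val : ℚ) - (p.val : ℚ)) := by
  have hq : (q : ℕ) ≤ m := Nat.lt_succ_iff.mp q.isLt
  have hpq' : (p : ℕ) < q := hpq
  rw [cdef, cdef]
  rw [← Finset.Ico_add_one_right_eq_Icc, ← Finset.Ico_add_one_right_eq_Icc, ← Finset.Ico_add_one_right_eq_Icc]
  rw [← Finset.sum_Ico_consecutive (fun a => (k a : ℚ)) (by omega : p.val + 2 ≤ q.val + 2)
    (by omega : q.val + 2 ≤ m + 1 + 1)]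
  have : q.val + 2 = (q.val + 1) + 1 := rfl
  rw [show q.val + 1 + 1 = q.val + 2 from rfl]
  ring
lemma cdef_strict {m : ℕ} {k : ℕ → ℕ} {p q : Fin (m + 1)} (hpq : p < q) :
    cdef m k q < cdef m k p := by
  have h1 := cdef_sub (k := k) hpq
  have h2 : (0 : ℚ) ≤ ∑ a ∈ Finset.Icc (p.val + 2) (q.val + 1), (k a : ℚ) :=
    Finset.sum_nonneg fun a _ => by positivity
  have h3 : (p.val : ℚ) < q.val := by exact_mod_cast (hpq : (p : ℕ) < q)
  linarith

lemma cdef_inj {m : ℕ} {k : ℕ → ℕ} {p q : Fin (m + 1)} (hpq : p ≠ q) :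
    cdef m k p ≠ cdef m k q := by
  rcases lt_or_gt_of_ne hpq with h | h
  · exact ne_of_gt (cdef_strict h)
  · exact ne_of_lt (cdef_strict h)

lemma cdef_gap (m : ℕ) (k : ℕ → ℕ) (t : Fin (m + 1)) (h0 : 0 < t.val) :
    cdef m k (pre t) = cdef m k t + (k (t.val + 1) : ℚ) + 1 := by
  have hlt : pre t < t := by
    rw [Fin.lt_def]
    simp only [pre]
    omega
  have h1 := cdef_sub (k := k) hlt
  have h2 : (pre t).val = t.val - 1 := rfl
  rw [h2] at h1
  rw [show t.val - 1 + 2 = t.val + 1 from by omega] at h1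
  rw [Finset.Icc_self, Finset.sum_singleton] at h1
  have h3 : ((t.val - 1 : ℕ) : ℚ) = (t.val : ℚ) - 1 := by
    push_cast [Nat.cast_sub (by omega : 1 ≤ t.val)]
    ring
  rw [h3] at h1
  linarith

lemma βv_succ {n : ℕ} (β : Fin n → ℕ) (p : Fin n) : βv β (p.val + 1) = β p := by
  have h : p.val + 1 - 1 < n := by simp only [Nat.add_sub_cancel]; exact p.isLt
  rw [βv, dif_pos h]
  congr 1

lemma reindex (m : ℕ) (k : ℕ → ℕ) (β : Fin (m + 1) → ℕ) :
    ∏ i ∈ Finset.Icc 1 (m + 1), ∏ j ∈ Finset.Icc (i + 1) (m + 1),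
        ((∑ a ∈ Finset.Icc i (j - 1), (k (a + 1) : ℚ))
          + (βv β i : ℚ) - (βv β j : ℚ) + (j : ℚ) - (i : ℚ))
      = Vd (fun p => cdef m k p + (β p : ℚ)) := by
  rw [Vd]
  refine Finset.prod_bij' (fun a ha => (⟨a - 1, by
      rw [Finset.mem_Icc] at ha; omega⟩ : Fin (m + 1)))
    (fun p _ => p.val + 1) ?_ ?_ ?_ ?_ ?_
  · intro a ha
    exact Finset.mem_univ _
  · intro p _
    beta_reduce
    rw [Finset.mem_Icc]
    have := p.isLt
    omega
  · intro a ha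
    beta_reduce
    rw [Finset.mem_Icc] at ha
    simp only [Fin.val_mk]
    omega
  · intro p _
    beta_reduce
    exact Fin.ext (by simp)
  · intro a ha
    rw [Finset.mem_Icc] at ha
    refine Finset.prod_bij' (fun b hb => (⟨b - 1, by
        rw [Finset.mem_Icc] at hb; omega⟩ : Fin (m + 1)))
      (fun q _ => q.val + 1) ?_ ?_ ?_ ?_ ?_
    · intro b hb
      beta_reduce
      rw [Finset.mem_Icc] at hb
      rw [Finset.mem_Ioi, Fin.lt_def]
      simp only [Fin.val_mk]
      omega
    · intro q hq
      beta_reduce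
      rw [Finset.mem_Ioi, Fin.lt_def] at hq
      rw [Finset.mem_Icc]
      have := q.isLt
      simp only [Fin.val_mk] at hq
      omega
    · intro b hb
      beta_reduce
      rw [Finset.mem_Icc] at hb
      simp only [Fin.val_mk]
      omega
    · intro q _
      beta_reduce
      exact Fin.ext (by simp)
    · intro b hb
      rw [Finset.mem_Icc] at hb
      -- the factor identity
      have hab : (⟨a - 1, by omega⟩ : Fin (m + 1)) < (⟨b - 1, by omega⟩ : Fin (m + 1)) := by
        rw [Fin.lt_def]; simp only []; omega
      have hsub := cdef_sub (k := k) hab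
      simp only [] at hsub
      -- shift the sum
      have hshift : ∑ a' ∈ Finset.Icc a (b - 1), (k (a' + 1) : ℚ)
          = ∑ y ∈ Finset.Icc (a - 1 + 2) (b - 1 + 1), (k y : ℚ) := by
        rw [show a - 1 + 2 = a + 1 from by omega,
          ← Finset.map_add_right_Icc a (b - 1) 1, Finset.sum_map]
        simp [addRightEmbedding_apply]
      rw [βv, dif_pos (by omega : a - 1 < m + 1), βv, dif_pos (by omega : b - 1 < m + 1)]
      rw [hshift]
      have hca : ((a - 1 : ℕ) : ℚ) = (a : ℚ) - 1 := by
        push_cast [Nat.cast_sub (by omega : 1 ≤ a)]; ring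
      have hcb : ((b - 1 : ℕ) : ℚ) = (b : ℚ) - 1 := by
        push_cast [Nat.cast_sub (by omega : 1 ≤ b)]; ring
      rw [hca, hcb] at hsub
      linarith

lemma reindex0 (m : ℕ) (k : ℕ → ℕ) :
    ∏ i ∈ Finset.Icc 1 (m + 1), ∏ j ∈ Finset.Icc (i + 1) (m + 1),
        ((∑ a ∈ Finset.Icc i (j - 1), (k (a + 1) : ℚ)) + (j : ℚ) - (i : ℚ))
      = Vd (cdef m k) := by
  have hz : ∀ t, βv (fun _ : Fin (m + 1) => (0 : ℕ)) t = 0 := by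
    intro t
    unfold βv
    split <;> rfl
  have h := reindex m k (fun _ => 0)
  simp only [hz, Nat.cast_zero, sub_zero, add_zero] at h
  exact h


/-- The sum-product identity (3.41): summing over all `β ∈ ℕ^n` with `|β| = r` and
`β_i ≤ k_i` for `i ∈ {2,...,n}` (`β_1` unconstrained),
`∑_β ∏_{1≤i<j≤n} ((∑_{a=i}^{j−1} k_{a+1}) + β_i − β_j + j − i)/(j − i)
  = C(n+r−1, n−1)·∏_{1≤i<j≤n} ((∑_{a=i}^{j−1} k_{a+1}) + j − i)/(j − i)` in `ℚ`. -/
theorem stmt8 (n : ℕ) (hn : 2 ≤ n) (k : ℕ → ℕ) (r : ℕ) :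
    ∑ β ∈ Finset.filter
        (fun β : Fin n → ℕ => (∑ i, β i = r) ∧
          ∀ t ∈ Finset.Icc 2 n, βv β t ≤ k t)
        (Fintype.piFinset fun _ : Fin n => Finset.range (r + 1)),
      ∏ i ∈ Finset.Icc 1 n, ∏ j ∈ Finset.Icc (i + 1) n,
        ((∑ a ∈ Finset.Icc i (j - 1), (k (a + 1) : ℚ))
          + (βv β i : ℚ) - (βv β j : ℚ) + (j : ℚ) - (i : ℚ)) / ((j : ℚ) - (i : ℚ))
    = (Nat.choose (n + r - 1) (n - 1) : ℚ) *
        ∏ i ∈ Finset.Icc 1 n, ∏ j ∈ Finset.Icc (i + 1) n,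
          ((∑ a ∈ Finset.Icc i (j - 1), (k (a + 1) : ℚ))
            + (j : ℚ) - (i : ℚ)) / ((j : ℚ) - (i : ℚ)) := by
  obtain ⟨m, rfl⟩ : ∃ m, n = m + 1 := ⟨n - 1, by omega⟩
  have hchoose : m + 1 + r - 1 = m + r := by omega
  have hchoose2 : m + 1 - 1 = m := by omega
  rw [hchoose, hchoose2]
  classical
  have hF : Finset.filter
        (fun β : Fin (m + 1) → ℕ => (∑ i, β i = r) ∧
          ∀ t ∈ Finset.Icc 2 (m + 1), βv β t ≤ k t)
        (Fintype.piFinset fun _ : Fin (m + 1) => Finset.range (r + 1))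
      = (Finset.Nat.antidiagonalTuple (m + 1) r).filter
          (fun β => ∀ p : Fin (m + 1), 0 < p.val → β p ≤ k (p.val + 1)) := by
    ext β
    simp only [Finset.mem_filter, Fintype.mem_piFinset, Finset.mem_range,
      Finset.Nat.mem_antidiagonalTuple, Finset.mem_Icc]
    constructor
    · rintro ⟨hb, hsum, hcon⟩
      refine ⟨hsum, fun p hp => ?_⟩
      have h := hcon (p.val + 1) ⟨by omega, by have := p.isLt; omega⟩
      rwa [βv_succ] at h
    · rintro ⟨hsum, hcon⟩
      refine ⟨fun i => ?_, hsum, fun t ht => ?_⟩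
      · have : β i ≤ r := hsum ▸ Finset.single_le_sum (f := fun i => β i)
          (fun _ _ => Nat.zero_le _) (Finset.mem_univ i)
        omega
      · obtain ⟨ht2, htm⟩ := ht
        have hlt : t - 1 < m + 1 := by omega
        rw [βv, dif_pos hlt]
        have h2 := hcon ⟨t - 1, hlt⟩ (by simp only [Fin.val_mk]; omega)
        simp only [Fin.val_mk] at h2
        rwa [show t - 1 + 1 = t from by omega] at h2
  rw [hF]
  simp only [div_eq_mul_inv, Finset.prod_mul_distrib, Finset.prod_inv_distrib]
  simp only [reindex m k, reindex0 m k]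
  rw [← Finset.sum_mul]
  have hA : ∑ β ∈ (Finset.Nat.antidiagonalTuple (m + 1) r).filter
        (fun β => ∀ p : Fin (m + 1), 0 < p.val → β p ≤ k (p.val + 1)),
      Vd (fun t => cdef m k t + (β t : ℚ)) = (Nat.choose (m + r) m : ℚ) * Vd (cdef m k) := by
    have h1 := Finset.sum_filter_add_sum_filter_not (Finset.Nat.antidiagonalTuple (m + 1) r)
      (fun β => ∀ p : Fin (m + 1), 0 < p.val → β p ≤ k (p.val + 1))
      (fun β => Vd (fun t => cdef m k t + (β t : ℚ)))
    rw [violSum (m + 1) r k (cdef m k) (fun t h0 => cdef_gap m k t h0), add_zero] at h1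
    rw [h1, key_s8 m r (cdef m k) (fun i j _ _ hij => cdef_inj hij)]
  rw [hA]
  ring
end

section
/- Let n ≥ 2 and k_1,...,k_n ∈ ℕ. Summing over all β = (β_1,...,β_n) ∈ ℕ^n with β_i ≤ k_i for every i ∈ {1,...,n}, one has ∑_{β} ∏_{1≤i<j≤n} ((∑_{a=i}^{j−1} k_{a+1}) + β_i − β_j + j − i)/(j − i) = ∏_{1≤i<j≤n+1} ((∑_{a=i}^{j−1} k_a) + j − i)/(j − i), as an identity in ℚ (this is the numeric sl(n+1) ↓ sl(n) branching rule). -/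
open Finset Matrix Polynomial Nat

lemma desc_tele (j a : ℕ) : ∀ b : ℕ, a ≤ b →
    (∑ z ∈ Finset.Ico a b, ((z.descFactorial j : ℚ))) * ((j : ℚ) + 1)
      = (b.descFactorial (j+1) : ℚ) - (a.descFactorial (j+1) : ℚ) := by
  intro b
  induction b with
  | zero => intro h; interval_cases a; simp
  | succ b ih =>
    intro h
    rcases Nat.lt_or_ge a (b+1) with h' | h'
    · have hab : a ≤ b := Nat.lt_succ_iff.mp h'
      rw [Finset.sum_Ico_succ_top hab, add_mul, ih hab]
      have key : ((b+1).descFactorial (j+1) : ℚ)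
          = (b.descFactorial (j+1) : ℚ) + (b.descFactorial j : ℚ) * ((j : ℚ) + 1) := by
        rcases Nat.lt_or_ge b j with hb | hb
        · rw [Nat.descFactorial_eq_zero_iff_lt.mpr hb,
            Nat.descFactorial_eq_zero_iff_lt.mpr (by omega : b < j + 1),
            Nat.descFactorial_eq_zero_iff_lt.mpr (by omega : b + 1 < j + 1)]
          simp
        · rw [Nat.succ_descFactorial_succ, Nat.descFactorial_succ]
          push_cast [Nat.cast_sub hb]
          ring
      rw [key]; ring
    · have : a = b + 1 := le_antisymm h h'
      subst this; simp

lemma detDF (m : ℕ) (y : Fin m → ℕ) :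
    (Matrix.of (fun i j : Fin m => ((y i).descFactorial (j : ℕ) : ℚ))).det
      = (Matrix.vandermonde (fun i => ((y i : ℚ)))).det := by
  rw [Matrix.det_eval_matrixOfPolynomials_eq_det_vandermonde (fun i => ((y i : ℚ)))
      (fun i => descPochhammer ℚ (i : ℕ)) (fun i => descPochhammer_natDegree ℚ (i : ℕ))
      (fun i => monic_descPochhammer ℚ (i : ℕ))]
  congr 1
  ext i j
  rw [Matrix.of_apply, Matrix.of_apply, descPochhammer_eval_eq_descFactorial]

lemma fact_prod (m : ℕ) : (m ! : ℚ) = ∏ j : Fin m, ((j : ℕ) + 1 : ℚ) := by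
  induction m with
  | zero => simp
  | succ m ih =>
    rw [Fin.prod_univ_castSucc]
    simp only [Fin.coe_castSucc, Fin.val_last]
    rw [← ih, Nat.factorial_succ]; push_cast; ring

lemma core (m : ℕ) (Y : Fin (m+1) → ℕ) (hY : ∀ i : Fin m, Y i.castSucc ≤ Y i.succ) :
    (∑ z ∈ Fintype.piFinset (fun i : Fin m => Finset.Ico (Y i.castSucc) (Y i.succ)),
      (Matrix.vandermonde (fun i => ((z i : ℚ)))).det) * (m ! : ℚ)
    = (Matrix.vandermonde (fun i : Fin (m+1) => ((Y i : ℚ)))).det := by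
  have h2 := MultilinearMap.map_sum_finset
      (Matrix.detRowAlternating (R := ℚ) (n := Fin m)).toMultilinearMap
      (fun (i : Fin m) (v : ℕ) => fun j : Fin m => ((v.descFactorial (j : ℕ) : ℚ)))
      (fun i : Fin m => Finset.Ico (Y i.castSucc) (Y i.succ))
  have h1 : ∀ z : Fin m → ℕ, (Matrix.vandermonde (fun i => ((z i : ℚ)))).det
      = (Matrix.detRowAlternating (R := ℚ) (n := Fin m)).toMultilinearMap
          (fun i (j : Fin m) => ((z i).descFactorial (j : ℕ) : ℚ)) := by
    intro z
    rw [← detDF m z]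
    rfl
  simp_rw [h1]
  rw [← h2]
  -- now LHS is detRowAlternating (fun i => ∑ v ∈ Ico .., fun j => dF v j) * m!
  have h3 : (Matrix.detRowAlternating (R := ℚ) (n := Fin m)).toMultilinearMap
      (fun i => ∑ v ∈ Finset.Ico (Y i.castSucc) (Y i.succ),
        fun j : Fin m => ((v.descFactorial (j : ℕ) : ℚ)))
      = (Matrix.of (fun i j : Fin m =>
          ∑ v ∈ Finset.Ico (Y i.castSucc) (Y i.succ), ((v.descFactorial (j : ℕ) : ℚ)))).det := by
    have harg : (fun i => ∑ v ∈ Finset.Ico (Y i.castSucc) (Y i.succ),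
          fun j : Fin m => ((v.descFactorial (j : ℕ) : ℚ)))
        = fun (i j : Fin m) => ∑ v ∈ Finset.Ico (Y i.castSucc) (Y i.succ),
            ((v.descFactorial (j : ℕ) : ℚ)) := by
      funext i j
      simp
    rw [harg]
    rfl
  rw [h3, fact_prod, mul_comm, ← Matrix.det_mul_row (fun j : Fin m => ((j : ℕ) + 1 : ℚ))]
  -- entries telescoped
  have h4 : (Matrix.of fun i j : Fin m => ((j : ℕ) + 1 : ℚ) *
        (Matrix.of (fun i j : Fin m =>
          ∑ v ∈ Finset.Ico (Y i.castSucc) (Y i.succ), ((v.descFactorial (j : ℕ) : ℚ)))) i j)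
      = Matrix.of (fun i j : Fin m =>
          ((Y i.succ).descFactorial ((j : ℕ) + 1) : ℚ)
            - ((Y i.castSucc).descFactorial ((j : ℕ) + 1) : ℚ)) := by
    ext i j
    simp only [Matrix.of_apply]
    rw [mul_comm, desc_tele _ _ _ (hY i)]
  rw [h4]
  -- now show det B = det (vandermonde Y)
  set E : Matrix (Fin (m+1)) (Fin (m+1)) ℚ :=
    Matrix.of (fun i j : Fin (m+1) => ((Y i).descFactorial (j : ℕ) : ℚ)) with hE
  set E' : Matrix (Fin (m+1)) (Fin (m+1)) ℚ :=
    Matrix.of (fun i j : Fin (m+1) => Fin.cases (motive := fun _ => ℚ)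
      (((Y 0).descFactorial (j : ℕ) : ℚ))
      (fun i' => ((Y i'.succ).descFactorial (j : ℕ) : ℚ)
        - ((Y i'.castSucc).descFactorial (j : ℕ) : ℚ)) i) with hE'
  have hEE' : E.det = E'.det := by
    apply Matrix.det_eq_of_forall_row_eq_smul_add_pred (fun _ => (1 : ℚ))
    · intro j; simp [hE, hE']
    · intro i j; simp [hE, hE']
  have hsub : E'.submatrix (Fin.succAbove 0) Fin.succ
      = Matrix.of (fun i j : Fin m =>
          ((Y i.succ).descFactorial ((j : ℕ) + 1) : ℚ)
            - ((Y i.castSucc).descFactorial ((j : ℕ) + 1) : ℚ)) := by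
    ext i j
    simp [hE', Matrix.submatrix_apply, Fin.succAbove_zero, Fin.val_succ]
  have hdetE' : E'.det = (Matrix.of (fun i j : Fin m =>
          ((Y i.succ).descFactorial ((j : ℕ) + 1) : ℚ)
            - ((Y i.castSucc).descFactorial ((j : ℕ) + 1) : ℚ))).det := by
    rw [Matrix.det_succ_column_zero, Finset.sum_eq_single_of_mem (0 : Fin (m+1))
      (Finset.mem_univ _)]
    · rw [hsub]; simp [hE']
    · intro i _ hi
      obtain ⟨i', rfl⟩ := Fin.eq_succ_of_ne_zero hi
      simp [hE']
  rw [← hdetE', ← hEE', hE, detDF (m+1) Y]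

lemma prod_pairs (N : ℕ) (f : ℕ → ℕ → ℚ) :
    ∏ i ∈ Finset.Icc 1 N, ∏ j ∈ Finset.Icc (i+1) N, f i j
      = ∏ i : Fin N, ∏ j ∈ Finset.range (i : ℕ), f (N - (i : ℕ)) (N - j) := by
  rw [Fin.prod_univ_eq_prod_range (fun i => ∏ j ∈ Finset.range i, f (N - i) (N - j)) N]
  refine Finset.prod_nbij' (fun s => N - s) (fun i => N - i) ?_ ?_ ?_ ?_ ?_
  · intro s hs; simp only [Finset.mem_Icc] at hs; simp only [Finset.mem_range]; omega
  · intro i hi; simp only [Finset.mem_range] at hi; simp only [Finset.mem_Icc]; omega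
  · intro s hs; simp only [Finset.mem_Icc] at hs; show N - (N - s) = s; omega
  · intro i hi; simp only [Finset.mem_range] at hi; show N - (N - i) = i; omega
  · intro s hs
    simp only [Finset.mem_Icc] at hs
    have hNs : N - (N - s) = s := by omega
    rw [hNs]
    refine Finset.prod_nbij' (fun t => N - t) (fun j => N - j) ?_ ?_ ?_ ?_ ?_
    · intro t ht; simp only [Finset.mem_Icc] at ht; simp only [Finset.mem_range]; omega
    · intro j hj; simp only [Finset.mem_range] at hj; simp only [Finset.mem_Icc]; omega
    · intro t ht; simp only [Finset.mem_Icc] at ht; show N - (N - t) = t; omega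
    · intro j hj; simp only [Finset.mem_range] at hj; show N - (N - j) = j; omega
    · intro t ht; simp only [Finset.mem_Icc] at ht
      have : N - (N - t) = t := by omega
      rw [this]

lemma vand_eq (N : ℕ) (v : ℕ → ℚ) :
    (Matrix.vandermonde (fun i : Fin N => v (i : ℕ))).det
      = ∏ i : Fin N, ∏ j ∈ Finset.range (i : ℕ), (v (i : ℕ) - v j) := by
  rw [Matrix.det_vandermonde]
  rw [Finset.prod_comm' (t' := Finset.univ) (s' := fun y : Fin N => Finset.Iio y)
    (by intro x y; simp [Finset.mem_Iio, Finset.mem_Ioi])]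
  refine Finset.prod_congr rfl ?_
  intro i _
  refine Finset.prod_bij (fun (a : Fin N) _ => (a : ℕ)) ?_ ?_ ?_ ?_
  · intro a ha; simp only [Finset.mem_Iio] at ha; simp only [Finset.mem_range]
    exact ha
  · intro a _ b _ h; exact Fin.ext h
  · intro b hb; simp only [Finset.mem_range] at hb
    exact ⟨⟨b, lt_trans hb i.isLt⟩, Finset.mem_Iio.mpr (by simpa [Fin.lt_iff_val_lt_val]), rfl⟩
  · intro a _; rfl

-- sum splitting over Icc
lemma sum_split (k : ℕ → ℕ) (s t n : ℕ) (hst : s ≤ t) (h1 : 1 ≤ t) (htn : t ≤ n+1) :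
    (∑ a ∈ Finset.Icc s n, (k a : ℚ))
      = (∑ a ∈ Finset.Icc s (t-1), (k a : ℚ)) + ∑ a ∈ Finset.Icc t n, (k a : ℚ) := by
  have hset : Finset.Icc s n = Finset.Icc s (t-1) ∪ Finset.Icc t n := by
    ext a; simp only [Finset.mem_Icc, Finset.mem_union]; omega
  have hdisj : Disjoint (Finset.Icc s (t-1)) (Finset.Icc t n) := by
    simp only [Finset.disjoint_left, Finset.mem_Icc]
    intro a ha hb; omega
  rw [hset, Finset.sum_union hdisj]

-- index shift
lemma shift_sum (k : ℕ → ℕ) (s t : ℕ) :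
    (∑ a ∈ Finset.Icc s t, (k (a+1) : ℚ)) = ∑ a ∈ Finset.Icc (s+1) (t+1), (k a : ℚ) := by
  refine Finset.sum_nbij' (fun a => a + 1) (fun a => a - 1) ?_ ?_ ?_ ?_ ?_
  · intro a ha; simp only [Finset.mem_Icc] at *; omega
  · intro a ha; simp only [Finset.mem_Icc] at *; omega
  · intro a ha; simp only [Finset.mem_Icc] at ha; show a + 1 - 1 = a; omega
  · intro a ha; simp only [Finset.mem_Icc] at ha; show a - 1 + 1 = a; omega
  · intro a ha; rfl

def Dfin (N : ℕ) : ℚ := ∏ i : Fin N, ∏ j ∈ Finset.range (i : ℕ), (((i : ℕ) : ℚ) - (j : ℚ))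

lemma prod_range_sub_fact (N : ℕ) : ∏ j ∈ Finset.range N, ((N : ℚ) - (j : ℚ)) = (N ! : ℚ) := by
  induction N with
  | zero => simp
  | succ N ih =>
    rw [Finset.prod_range_succ']
    push_cast
    have : ∀ j ∈ Finset.range N, ((N:ℚ) + 1 - ((j:ℚ) + 1)) = (N:ℚ) - j := by intros; ring
    rw [Finset.prod_congr rfl this, ih, Nat.factorial_succ]
    push_cast; ring

lemma Dfin_succ (N : ℕ) : Dfin (N+1) = Dfin N * (N ! : ℚ) := by
  unfold Dfin
  rw [Fin.prod_univ_castSucc]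
  simp only [Fin.coe_castSucc, Fin.val_last]
  congr 1
  exact prod_range_sub_fact N

lemma prod_quot (N : ℕ) (v : ℕ → ℚ) :
    (∏ i : Fin N, ∏ j ∈ Finset.range (i : ℕ), (v (i : ℕ) - v j) / (((i : ℕ) : ℚ) - (j : ℚ)))
      = (Matrix.vandermonde (fun i : Fin N => v (i : ℕ))).det / Dfin N := by
  unfold Dfin
  simp_rw [Finset.prod_div_distrib]
  rw [vand_eq]

/-- The numeric `sl(n+1) ↓ sl(n)` branching rule (3.42): summing over all `β ∈ ℕ^n`
with `β_i ≤ k_i` for every `i ∈ {1,...,n}`,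
`∑_β ∏_{1≤i<j≤n} ((∑_{a=i}^{j−1} k_{a+1}) + β_i − β_j + j − i)/(j − i)
  = ∏_{1≤i<j≤n+1} ((∑_{a=i}^{j−1} k_a) + j − i)/(j − i)` in `ℚ`. -/
theorem stmt9 (n : ℕ) (hn : 2 ≤ n) (k : ℕ → ℕ) :
    ∑ β ∈ Fintype.piFinset (fun i : Fin n => Finset.Iic (k ((i : ℕ) + 1))),
      ∏ i ∈ Finset.Icc 1 n, ∏ j ∈ Finset.Icc (i + 1) n,
        ((∑ a ∈ Finset.Icc i (j - 1), (k (a + 1) : ℚ))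
          + (βv β i : ℚ) - (βv β j : ℚ) + (j : ℚ) - (i : ℚ)) / ((j : ℚ) - (i : ℚ))
    = ∏ i ∈ Finset.Icc 1 (n + 1), ∏ j ∈ Finset.Icc (i + 1) (n + 1),
        ((∑ a ∈ Finset.Icc i (j - 1), (k a : ℚ))
          + (j : ℚ) - (i : ℚ)) / ((j : ℚ) - (i : ℚ)) := by
  classical
  set Yn : ℕ → ℕ := fun i => (∑ a ∈ Finset.Icc (n+1-i) n, k a) + i with hYn
  -- basic facts about Yn
  have hYnstep : ∀ i : ℕ, i < n → Yn (i+1) = Yn i + k (n - i) + 1 := by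
    intro i hi
    simp only [hYn]
    have h1 : n + 1 - (i+1) = n - i := by omega
    have h2 : n + 1 - i = (n - i) + 1 := by omega
    rw [h1, h2]
    have hins : Finset.Icc (n-i) n = insert (n-i) (Finset.Icc (n-i+1) n) := by
      ext a; simp only [Finset.mem_Icc, Finset.mem_insert]; omega
    rw [hins, Finset.sum_insert (by simp only [Finset.mem_Icc]; omega)]
    ring
  -- RHS computation
  have hR : (∏ i ∈ Finset.Icc 1 (n + 1), ∏ j ∈ Finset.Icc (i + 1) (n + 1),
        ((∑ a ∈ Finset.Icc i (j - 1), (k a : ℚ)) + (j : ℚ) - (i : ℚ)) / ((j : ℚ) - (i : ℚ)))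
      = (Matrix.vandermonde (fun i : Fin (n+1) => ((Yn (i : ℕ) : ℚ)))).det / Dfin (n+1) := by
    rw [prod_pairs (n+1) (fun i j => ((∑ a ∈ Finset.Icc i (j - 1), (k a : ℚ))
          + (j : ℚ) - (i : ℚ)) / ((j : ℚ) - (i : ℚ)))]
    rw [← prod_quot (n+1) (fun m => ((Yn m : ℚ)))]
    refine Finset.prod_congr rfl ?_
    intro i _
    refine Finset.prod_congr rfl ?_
    intro j hj
    simp only [Finset.mem_range] at hj
    have hij : j < (i : ℕ) := hj
    have hi : (i : ℕ) ≤ n + 1 := by omega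
    set s := n + 1 - (i : ℕ) with hs
    set t := n + 1 - j with ht
    have hst : s ≤ t := by omega
    have h1t : 1 ≤ t := by omega
    have htn : t ≤ n + 1 := by omega
    have hsplit := sum_split k s t n hst h1t htn
    have hYni : ((Yn (i:ℕ) : ℚ)) = (∑ a ∈ Finset.Icc s n, (k a : ℚ)) + ((i:ℕ) : ℚ) := by
      simp only [hYn]; push_cast; ring
    have hYnj : ((Yn j : ℚ)) = (∑ a ∈ Finset.Icc t n, (k a : ℚ)) + (j : ℚ) := by
      simp only [hYn, ht]; push_cast; ring
    have hcast_t : ((t : ℕ) : ℚ) = ((n:ℚ) + 1) - (j : ℚ) := by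
      simp only [ht]; push_cast [Nat.cast_sub (show j ≤ n + 1 by omega)]; ring
    have hcast_s : ((s : ℕ) : ℚ) = ((n:ℚ) + 1) - ((i:ℕ) : ℚ) := by
      simp only [hs]; push_cast [Nat.cast_sub hi]; ring
    rw [hYni, hYnj, hsplit, hcast_t, hcast_s]
    ring_nf
  -- LHS per-beta computation
  have hβv : ∀ (β : Fin n → ℕ) (i : Fin n), βv β (n - (i : ℕ)) = β (Fin.rev i) := by
    intro β i
    have hlt : n - (i : ℕ) - 1 < n := by omega
    simp only [βv]
    rw [dif_pos hlt]
    congr 1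
  have hL : ∀ β : Fin n → ℕ,
      (∏ i ∈ Finset.Icc 1 n, ∏ j ∈ Finset.Icc (i + 1) n,
        ((∑ a ∈ Finset.Icc i (j - 1), (k (a + 1) : ℚ))
          + (βv β i : ℚ) - (βv β j : ℚ) + (j : ℚ) - (i : ℚ)) / ((j : ℚ) - (i : ℚ)))
      = (Matrix.vandermonde (fun i : Fin n =>
          ((βv β (n - (i : ℕ)) + Yn (i : ℕ) : ℕ) : ℚ))).det / Dfin n := by
    intro β
    rw [prod_pairs n (fun i j => ((∑ a ∈ Finset.Icc i (j - 1), (k (a + 1) : ℚ))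
          + (βv β i : ℚ) - (βv β j : ℚ) + (j : ℚ) - (i : ℚ)) / ((j : ℚ) - (i : ℚ)))]
    rw [← prod_quot n (fun m => ((βv β (n - m) + Yn m : ℕ) : ℚ))]
    refine Finset.prod_congr rfl ?_
    intro i _
    refine Finset.prod_congr rfl ?_
    intro j hj
    simp only [Finset.mem_range] at hj
    have hij : j < (i : ℕ) := hj
    have hi : (i : ℕ) < n := i.isLt
    set s := n - (i : ℕ) with hs
    set t := n - j with ht
    have h1s : 1 ≤ s := by omega
    have hst : s < t := by omega
    have htn : t ≤ n := by omega
    have hshift := shift_sum k s (t - 1)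
    have ht1 : t - 1 + 1 = t := by omega
    rw [ht1] at hshift
    have hsplit := sum_split k (s+1) (t+1) n (by omega) (by omega) (by omega)
    have ht2 : t + 1 - 1 = t := by omega
    rw [ht2] at hsplit
    have hYni : ((βv β (n - (i : ℕ)) + Yn (i : ℕ) : ℕ) : ℚ)
        = (βv β s : ℚ) + (∑ a ∈ Finset.Icc (s+1) n, (k a : ℚ)) + ((i : ℕ) : ℚ) := by
      have : n + 1 - (i : ℕ) = s + 1 := by omega
      simp only [hYn, this]
      push_cast; ring
    have hYnj : ((βv β (n - j) + Yn j : ℕ) : ℚ)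
        = (βv β t : ℚ) + (∑ a ∈ Finset.Icc (t+1) n, (k a : ℚ)) + (j : ℚ) := by
      have : n + 1 - j = t + 1 := by omega
      simp only [hYn, this]
      push_cast; ring
    have hcast_t : ((t : ℕ) : ℚ) = (n : ℚ) - (j : ℚ) := by
      simp only [ht]; push_cast [Nat.cast_sub (show j ≤ n by omega)]; ring
    have hcast_s : ((s : ℕ) : ℚ) = (n : ℚ) - ((i : ℕ) : ℚ) := by
      simp only [hs]; push_cast [Nat.cast_sub (le_of_lt hi)]; ring
    rw [hYni, hYnj, hshift, hsplit, hcast_t, hcast_s]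
    ring_nf
  rw [Finset.sum_congr rfl (fun β _ => hL β), hR, ← Finset.sum_div]
  -- change of variables in the sum
  have hmono : ∀ i : Fin n,
      (fun i : Fin (n+1) => Yn (i : ℕ)) i.castSucc ≤ (fun i : Fin (n+1) => Yn (i : ℕ)) i.succ := by
    intro i
    show Yn (i : ℕ) ≤ Yn ((i : ℕ) + 1)
    rw [hYnstep (i : ℕ) i.isLt]
    omega
  have hc : (∑ z ∈ Fintype.piFinset (fun i : Fin n =>
        Finset.Ico (Yn ((i.castSucc : ℕ))) (Yn ((i.succ : ℕ)))),
      (Matrix.vandermonde (fun i => ((z i : ℚ)))).det) * (n ! : ℚ)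
      = (Matrix.vandermonde (fun i : Fin (n+1) => ((Yn (i : ℕ) : ℚ)))).det :=
    core n (fun i : Fin (n+1) => Yn (i : ℕ)) hmono
  have hrevk : ∀ i : Fin n, (Fin.rev i : ℕ) + 1 = n - (i : ℕ) := by
    intro i
    simp only [Fin.val_rev]
    omega
  have hchg : (∑ β ∈ Fintype.piFinset (fun i : Fin n => Finset.Iic (k ((i : ℕ) + 1))),
      (Matrix.vandermonde (fun i : Fin n =>
          ((βv β (n - (i : ℕ)) + Yn (i : ℕ) : ℕ) : ℚ))).det)
      = ∑ z ∈ Fintype.piFinset (fun i : Fin n =>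
          Finset.Ico (Yn ((i.castSucc : ℕ))) (Yn ((i.succ : ℕ)))),
        (Matrix.vandermonde (fun i => ((z i : ℚ)))).det := by
    refine Finset.sum_nbij' (fun β => fun i : Fin n => β (Fin.rev i) + Yn (i : ℕ))
      (fun z => fun i : Fin n => z (Fin.rev i) - Yn ((Fin.rev i : ℕ))) ?_ ?_ ?_ ?_ ?_
    · intro β hβ
      simp only [Fintype.mem_piFinset, Finset.mem_Iic] at hβ
      simp only [Fintype.mem_piFinset, Finset.mem_Ico]
      intro i
      have hb := hβ (Fin.rev i)
      rw [hrevk i] at hb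
      have hstep := hYnstep (i : ℕ) i.isLt
      have hcs : ((Fin.castSucc i : Fin (n+1)) : ℕ) = (i : ℕ) := rfl
      have hsc : ((Fin.succ i : Fin (n+1)) : ℕ) = (i : ℕ) + 1 := rfl
      rw [hcs, hsc, hstep]
      omega
    · intro z hz
      simp only [Fintype.mem_piFinset, Finset.mem_Ico] at hz
      simp only [Fintype.mem_piFinset, Finset.mem_Iic]
      intro i
      have hzz := hz (Fin.rev i)
      have hcs : ((Fin.castSucc (Fin.rev i) : Fin (n+1)) : ℕ) = ((Fin.rev i) : ℕ) := rfl
      have hsc : ((Fin.succ (Fin.rev i) : Fin (n+1)) : ℕ) = ((Fin.rev i) : ℕ) + 1 := rfl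
      rw [hcs, hsc, hYnstep ((Fin.rev i) : ℕ) (Fin.rev i).isLt] at hzz
      have : n - ((Fin.rev i) : ℕ) = (i : ℕ) + 1 := by
        simp only [Fin.val_rev]; omega
      rw [this] at hzz
      omega
    · intro β hβ
      funext i
      simp only [Fin.rev_rev]
      omega
    · intro z hz
      simp only [Fintype.mem_piFinset, Finset.mem_Ico] at hz
      funext i
      simp only [Fin.rev_rev]
      have hzz := hz i
      have hcs : ((Fin.castSucc i : Fin (n+1)) : ℕ) = (i : ℕ) := rfl
      rw [hcs] at hzz
      exact Nat.sub_add_cancel hzz.1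
    · intro β hβ
      have hfun : (fun i : Fin n => ((βv β (n - (i : ℕ)) + Yn (i : ℕ) : ℕ) : ℚ))
          = fun i : Fin n => ((β (Fin.rev i) + Yn (i : ℕ) : ℕ) : ℚ) := by
        funext i
        rw [hβv β i]
      rw [hfun]
  rw [hchg, Dfin_succ, ← hc]
  rw [mul_div_mul_right _ _ (by exact_mod_cast Nat.factorial_ne_zero n : (n ! : ℚ) ≠ 0)]
end

section
/- Let n ≥ 2 and k_1,...,k_n ∈ ℕ. For 0 ≤ s ≤ n−1 define m^{(s)} ∈ ℕ^{n−1} by m^{(s)}_i = k_i if i < s, m^{(s)}_s = k_s + k_{s+1} + 1 if i = s (for s ≥ 1), and m^{(s)}_i = k_{i+1} if i > s (so m^{(0)}_i = k_{i+1} for all i). Then ∑_{s=0}^{n−1} (−1)^{s}·C(∑_{j=s+1}^{n}(k_j+1), n)·∏_{1≤i<j≤n} ((∑_{a=i}^{j−1} m^{(s)}_a) + j − i)/(j − i) = ∏_{1≤i<j≤n+1} ((∑_{a=i}^{j−1} k_a) + j − i)/(j − i), as an identity in ℚ. -/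
open Finset

/-- The weight `m^{(s)} ∈ ℕ^{n−1}` (1-based): `m^{(s)}_i = k_i` if `i < s`,
`m^{(s)}_s = k_s + k_{s+1} + 1`, and `m^{(s)}_i = k_{i+1}` if `i > s`. -/
def mWt (k : ℕ → ℕ) (s i : ℕ) : ℕ :=
  if i < s then k i else if i = s then k s + k (s + 1) + 1 else k (i + 1)

section Aux

open Polynomial

lemma keyDet (n : ℕ) (P : ℚ[X]) (hP : P.Monic) (hd : P.natDegree = n) (v : Fin (n+1) → ℚ) :
    ∑ i : Fin (n+1), (-1:ℚ)^((i:ℕ)+n) * P.eval (v i) *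
      ∏ p : Fin n, ∏ q ∈ Finset.Ioi p, (v (i.succAbove q) - v (i.succAbove p))
    = ∏ p : Fin (n+1), ∏ q ∈ Finset.Ioi p, (v q - v p) := by
  set pp : Fin (n+1) → ℚ[X] := fun j => if j = Fin.last n then P else X ^ (j:ℕ) with hpp
  have hdeg : ∀ j, (pp j).natDegree = j := by
    intro j
    by_cases h : j = Fin.last n
    · simp [hpp, h, hd]
    · simp [hpp, h]
  have hm : ∀ j, (pp j).Monic := by
    intro j
    by_cases h : j = Fin.last n
    · simp [hpp, h, hP]
    · simp [hpp, h, monic_X_pow]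
  have h := Matrix.det_eval_matrixOfPolynomials_eq_det_vandermonde v pp hdeg hm
  rw [Matrix.det_vandermonde] at h
  rw [Matrix.det_succ_column _ (Fin.last n)] at h
  rw [h]
  apply Finset.sum_congr rfl
  intro i _
  have hminor : (Matrix.of fun i j => (pp j).eval (v i)).submatrix i.succAbove
      (Fin.last n).succAbove = Matrix.vandermonde (v ∘ i.succAbove) := by
    ext p q
    have : (Fin.last n).succAbove q = q.castSucc := by simp [Fin.succAbove_last]
    simp [Matrix.vandermonde, this, hpp, Fin.castSucc_lt_last q |>.ne]
  rw [hminor, Matrix.det_vandermonde]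
  have : ((Fin.last n : Fin (n+1)) : ℕ) = n := rfl
  simp [hpp, this]

lemma flipProd (N : ℕ) (a : Fin N → ℚ) :
    ∏ p : Fin N, ∏ q ∈ Finset.Ioi p, (a p - a q)
    = (-1:ℚ)^(∑ i ∈ Finset.range N, i) * ∏ p : Fin N, ∏ q ∈ Finset.Ioi p, (a q - a p) := by
  have h1 : ∀ p : Fin N, ∏ q ∈ Finset.Ioi p, (a p - a q)
      = (-1:ℚ)^((Finset.Ioi p).card) * ∏ q ∈ Finset.Ioi p, (a q - a p) := by
    intro p
    rw [← Finset.prod_const, ← Finset.prod_mul_distrib]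
    apply Finset.prod_congr rfl
    intro q _
    ring
  simp_rw [h1]
  rw [Finset.prod_mul_distrib, Finset.prod_pow_eq_pow_sum]
  congr 1
  congr 1
  have h2 : ∀ p : Fin N, (Finset.Ioi p).card = N - 1 - (p : ℕ) := fun p => Fin.card_Ioi p
  simp_rw [h2]
  rw [Fin.sum_univ_eq_sum_range (fun i => N - 1 - i)]
  exact Finset.sum_range_reflect (fun i => i) N

lemma key_s10 (n : ℕ) (P : ℚ[X]) (hP : P.Monic) (hd : P.natDegree = n) (v : Fin (n+1) → ℚ) :
    ∑ i : Fin (n+1), (-1:ℚ)^(i:ℕ) * P.eval (v i) *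
      ∏ p : Fin n, ∏ q ∈ Finset.Ioi p, (v (i.succAbove p) - v (i.succAbove q))
    = ∏ p : Fin (n+1), ∏ q ∈ Finset.Ioi p, (v p - v q) := by
  have hS : ∑ i ∈ Finset.range (n+1), i = (∑ i ∈ Finset.range n, i) + n := by
    rw [Finset.sum_range_succ]
  rw [flipProd (n+1) v, hS]
  have hterm : ∀ i : Fin (n+1),
      (-1:ℚ)^(i:ℕ) * P.eval (v i) *
        ∏ p : Fin n, ∏ q ∈ Finset.Ioi p, (v (i.succAbove p) - v (i.succAbove q))
      = (-1:ℚ)^((∑ i ∈ Finset.range n, i) + n) *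
        ((-1:ℚ)^((i:ℕ)+n) * P.eval (v i) *
          ∏ p : Fin n, ∏ q ∈ Finset.Ioi p, (v (i.succAbove q) - v (i.succAbove p))) := by
    intro i
    have hf := flipProd n (v ∘ i.succAbove)
    simp only [Function.comp] at hf
    rw [hf]
    rw [pow_add, pow_add]
    have : ((-1:ℚ))^n * (-1:ℚ)^n = 1 := by
      rw [← pow_add, ← two_mul, pow_mul, neg_one_sq, one_pow]
    linear_combination (-((-1:ℚ)^(i:ℕ)) * Polynomial.eval (v i) P *
      (-1:ℚ)^(∑ i ∈ Finset.range n, i) *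
      (∏ p : Fin n, ∏ q ∈ Finset.Ioi p, (v (i.succAbove q) - v (i.succAbove p)))) * this
  simp_rw [hterm]
  rw [← Finset.mul_sum, keyDet n P hP hd v]

def lQ (k : ℕ → ℕ) (n t : ℕ) : ℚ := ∑ a ∈ Finset.Icc t n, ((k a : ℚ) + 1)

lemma sum_shiftQ (f : ℕ → ℚ) (a b : ℕ) :
    ∑ x ∈ Finset.Ico a b, f (x + 1) = ∑ x ∈ Finset.Ico (a + 1) (b + 1), f x := by
  rw [← Finset.map_add_right_Ico a b 1, Finset.sum_map]
  rfl

lemma lQ_sub (k : ℕ → ℕ) (n : ℕ) {i j : ℕ} (hij : i < j) (hj : j ≤ n + 1) :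
    lQ k n i - lQ k n j = (∑ a ∈ Finset.Icc i (j - 1), (k a : ℚ)) + (j : ℚ) - (i : ℚ) := by
  have h := Finset.sum_Ico_consecutive (fun a => ((k a : ℚ) + 1)) hij.le hj
  unfold lQ
  obtain ⟨m, rfl⟩ : ∃ m, j = m + 1 := ⟨j - 1, by omega⟩
  rw [← Finset.Ico_add_one_right_eq_Icc i n, ← Finset.Ico_add_one_right_eq_Icc (m+1) n, ← h]
  have hIco : Finset.Icc i (m + 1 - 1) = Finset.Ico i (m + 1) := by
    rw [Finset.Ico_add_one_right_eq_Icc]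
    simp
  rw [hIco, Finset.sum_add_distrib, Finset.sum_const, Nat.card_Ico]
  have : ((m + 1 - i : ℕ) : ℚ) = (m : ℚ) + 1 - (i : ℚ) := by
    have : i ≤ m + 1 := hij.le
    push_cast [Nat.cast_sub this]
    ring
  simp [this]
  ring

lemma mfact (k : ℕ → ℕ) (n s : ℕ) {i j : ℕ} (hi : 1 ≤ i) (hij : i < j) (hj : j ≤ n) :
    (∑ a ∈ Finset.Icc i (j - 1), (mWt k s a : ℚ)) + (j : ℚ) - (i : ℚ)
    = lQ k n (if i ≤ s then i else i + 1) - lQ k n (if j ≤ s then j else j + 1) := by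
  rcases le_or_gt j s with hjs | hsj
  · rw [if_pos (le_trans hij.le hjs), if_pos hjs,
      lQ_sub k n hij (by omega)]
    congr 1
    congr 1
    apply Finset.sum_congr rfl
    intro a ha
    rw [Finset.mem_Icc] at ha
    have : a < s := by omega
    simp [mWt, this]
  · rcases le_or_gt i s with his | hsi
    · rw [if_pos his, if_neg (by omega),
        lQ_sub k n (show i < j + 1 by omega) (by omega)]
      have hsum : (∑ a ∈ Finset.Icc i (j - 1), (mWt k s a : ℚ))
          = (∑ a ∈ Finset.Icc i (j + 1 - 1), (k a : ℚ)) + 1 := by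
        have h1 : Finset.Icc i (j - 1) = Finset.Ico i j := by
          rw [← Finset.Ico_add_one_right_eq_Icc]; congr 1; omega
        have h2 : Finset.Icc i (j + 1 - 1) = Finset.Ico i (j + 1) := by
          rw [← Finset.Ico_add_one_right_eq_Icc]; congr 1
        rw [h1, h2]
        rw [← Finset.sum_Ico_consecutive (fun a => (mWt k s a : ℚ)) (show i ≤ s by omega) (show s ≤ j by omega),
            ← Finset.sum_Ico_consecutive (fun a => (mWt k s a : ℚ)) (show s ≤ s + 1 by omega) (show s + 1 ≤ j by omega),
            ← Finset.sum_Ico_consecutive (fun a => (k a : ℚ)) (show i ≤ s by omega) (show s ≤ j + 1 by omega),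
            ← Finset.sum_Ico_consecutive (fun a => (k a : ℚ)) (show s ≤ s + 2 by omega) (show s + 2 ≤ j + 1 by omega),
            ← Finset.sum_Ico_consecutive (fun a => (k a : ℚ)) (show s ≤ s + 1 by omega) (show s + 1 ≤ s + 2 by omega)]
        have e1 : ∑ a ∈ Finset.Ico i s, (mWt k s a : ℚ) = ∑ a ∈ Finset.Ico i s, (k a : ℚ) := by
          apply Finset.sum_congr rfl
          intro a ha
          rw [Finset.mem_Ico] at ha
          simp [mWt, ha.2]
        have e2 : ∑ a ∈ Finset.Ico s (s + 1), (mWt k s a : ℚ)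
            = (k s : ℚ) + (k (s + 1) : ℚ) + 1 := by
          rw [Nat.Ico_succ_singleton, Finset.sum_singleton]
          simp [mWt]
        have e3 : ∑ a ∈ Finset.Ico (s + 1) j, (mWt k s a : ℚ)
            = ∑ a ∈ Finset.Ico (s + 2) (j + 1), (k a : ℚ) := by
          rw [← sum_shiftQ (fun a => (k a : ℚ)) (s + 1) j]
          apply Finset.sum_congr rfl
          intro a ha
          rw [Finset.mem_Ico] at ha
          have h1 : ¬ a < s := by omega
          have h2 : ¬ a = s := by omega
          simp [mWt, h1, h2]
        have e4 : ∑ a ∈ Finset.Ico s (s + 1), (k a : ℚ) = (k s : ℚ) := by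
          rw [Nat.Ico_succ_singleton, Finset.sum_singleton]
        have e5 : ∑ a ∈ Finset.Ico (s + 1) (s + 2), (k a : ℚ) = (k (s + 1) : ℚ) := by
          rw [show s + 2 = (s + 1) + 1 from rfl, Nat.Ico_succ_singleton, Finset.sum_singleton]
        rw [e1, e2, e3, e4, e5]
        ring
      rw [hsum]
      push_cast
      ring
    · rw [if_neg (by omega), if_neg (by omega),
        lQ_sub k n (show i + 1 < j + 1 by omega) (by omega)]
      have hsum : (∑ a ∈ Finset.Icc i (j - 1), (mWt k s a : ℚ))
          = ∑ a ∈ Finset.Icc (i + 1) (j + 1 - 1), (k a : ℚ) := by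
        have h1 : Finset.Icc i (j - 1) = Finset.Ico i j := by
          rw [← Finset.Ico_add_one_right_eq_Icc]; congr 1; omega
        have h2 : Finset.Icc (i + 1) (j + 1 - 1) = Finset.Ico (i + 1) (j + 1) := by
          rw [← Finset.Ico_add_one_right_eq_Icc]; congr 1
        rw [h1, h2, ← sum_shiftQ (fun a => (k a : ℚ)) i j]
        apply Finset.sum_congr rfl
        intro a ha
        rw [Finset.mem_Ico] at ha
        have hh1 : ¬ a < s := by omega
        have hh2 : ¬ a = s := by omega
        simp [mWt, hh1, hh2]
      rw [hsum]
      push_cast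
      ring

lemma reindexProd (N : ℕ) (hN : 1 ≤ N) (f : ℕ → ℕ → ℚ) :
    ∏ i ∈ Finset.Icc 1 N, ∏ j ∈ Finset.Icc (i + 1) N, f i j
    = ∏ p : Fin N, ∏ q ∈ Finset.Ioi p, f ((p : ℕ) + 1) ((q : ℕ) + 1) := by
  have inner : ∀ p : Fin N, ∏ q ∈ Finset.Ioi p, f ((p : ℕ) + 1) ((q : ℕ) + 1)
      = ∏ y ∈ Finset.Ioc (p : ℕ) (N - 1), f ((p : ℕ) + 1) (y + 1) := by
    intro p
    rw [show Finset.Ioc (p : ℕ) (N - 1) = Finset.Ioo (p : ℕ) N by ext y; simp only [Finset.mem_Ioc, Finset.mem_Ioo]; omega]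
    rw [← Fin.map_valEmbedding_Ioi, Finset.prod_map]
    rfl
  simp_rw [inner]
  rw [Fin.prod_univ_eq_prod_range (fun x => ∏ y ∈ Finset.Ioc x (N - 1), f (x + 1) (y + 1)) N]
  have houter : Finset.Icc 1 N = (Finset.range N).map (addRightEmbedding 1) := by
    rw [Finset.range_eq_Ico, Finset.map_add_right_Ico, Finset.Ico_add_one_right_eq_Icc]
  rw [houter, Finset.prod_map]
  apply Finset.prod_congr rfl
  intro x hx
  rw [Finset.mem_range] at hx
  have hinner2 : Finset.Icc ((addRightEmbedding 1) x + 1) N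
      = (Finset.Ioc x (N - 1)).map (addRightEmbedding 1) := by
    rw [Finset.map_add_right_Ioc, show N - 1 + 1 = N by omega, Finset.Icc_add_one_left_eq_Ioc]
    rfl
  rw [hinner2, Finset.prod_map]
  rfl

end Aux

/-- Corollary 3.4, second identity:
`∑_{s=0}^{n−1} (−1)^s·C(∑_{j=s+1}^{n}(k_j+1), n)·dim_{sl(n)}(m^{(s)})
  = ∏_{1≤i<j≤n+1} ((∑_{a=i}^{j−1} k_a) + j − i)/(j − i)` in `ℚ`,
where the `sl(n)` dimensions are given by Weyl's dimension formula. -/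
theorem stmt10 (n : ℕ) (hn : 2 ≤ n) (k : ℕ → ℕ) :
    ∑ s ∈ Finset.range n,
      (-1 : ℚ) ^ s * (Nat.choose (∑ j ∈ Finset.Icc (s + 1) n, (k j + 1)) n : ℚ) *
        ∏ i ∈ Finset.Icc 1 n, ∏ j ∈ Finset.Icc (i + 1) n,
          ((∑ a ∈ Finset.Icc i (j - 1), (mWt k s a : ℚ))
            + (j : ℚ) - (i : ℚ)) / ((j : ℚ) - (i : ℚ))
    = ∏ i ∈ Finset.Icc 1 (n + 1), ∏ j ∈ Finset.Icc (i + 1) (n + 1),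
        ((∑ a ∈ Finset.Icc i (j - 1), (k a : ℚ))
          + (j : ℚ) - (i : ℚ)) / ((j : ℚ) - (i : ℚ)) := by
  classical
  have hn1 : 1 ≤ n := by omega
  set P : Polynomial ℚ := descPochhammer ℚ n with hPdef
  have hPM : P.Monic := monic_descPochhammer ℚ n
  have hPd : P.natDegree = n := descPochhammer_natDegree (R := ℚ) n
  set v : Fin (n+1) → ℚ := fun i => lQ k n ((i : ℕ) + 1) with hv
  set D : ℕ → ℚ := fun N => ∏ i ∈ Finset.Icc 1 N, ∏ j ∈ Finset.Icc (i+1) N,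
    ((j:ℚ) - (i:ℚ)) with hDdef
  have hDne : ∀ N, D N ≠ 0 := by
    intro N
    rw [hDdef]
    rw [Finset.prod_ne_zero_iff]
    intro i hi
    rw [Finset.prod_ne_zero_iff]
    intro j hj
    rw [Finset.mem_Icc] at hj
    have : (i:ℚ) < (j:ℚ) := by exact_mod_cast (by omega : i < j)
    exact sub_ne_zero.mpr (ne_of_gt this)
  have hfac : ((n.factorial : ℕ) : ℚ) ≠ 0 := by
    exact_mod_cast Nat.factorial_ne_zero n
  -- choose rewriting
  have hchoose : ∀ s : ℕ,
      ((∑ j ∈ Finset.Icc (s + 1) n, (k j + 1)).choose n : ℚ)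
      = P.eval (lQ k n (s + 1)) / (n.factorial : ℚ) := by
    intro s
    have hcast : lQ k n (s + 1) = ((∑ j ∈ Finset.Icc (s + 1) n, (k j + 1) : ℕ) : ℚ) := by
      unfold lQ
      push_cast
      rfl
    rw [hcast, hPdef, descPochhammer_eval_eq_descFactorial,
      Nat.descFactorial_eq_factorial_mul_choose]
    push_cast
    field_simp
  -- set G
  set G : ℕ → ℚ := fun s => (-1:ℚ)^s * P.eval (lQ k n (s+1)) *
    ∏ p : Fin n, ∏ q ∈ Finset.Ioi p,
      (lQ k n (if (p:ℕ)+1 ≤ s then (p:ℕ)+1 else (p:ℕ)+2)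
        - lQ k n (if (q:ℕ)+1 ≤ s then (q:ℕ)+1 else (q:ℕ)+2)) with hGdef
  -- per-term rewriting of LHS
  have hterm : ∀ s ∈ Finset.range n,
      (-1 : ℚ) ^ s * (Nat.choose (∑ j ∈ Finset.Icc (s + 1) n, (k j + 1)) n : ℚ) *
        ∏ i ∈ Finset.Icc 1 n, ∏ j ∈ Finset.Icc (i + 1) n,
          ((∑ a ∈ Finset.Icc i (j - 1), (mWt k s a : ℚ))
            + (j : ℚ) - (i : ℚ)) / ((j : ℚ) - (i : ℚ))
      = G s / ((n.factorial : ℚ) * D n) := by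
    intro s _
    rw [hchoose s]
    have hnum : ∏ i ∈ Finset.Icc 1 n, ∏ j ∈ Finset.Icc (i + 1) n,
          ((∑ a ∈ Finset.Icc i (j - 1), (mWt k s a : ℚ)) + (j : ℚ) - (i : ℚ))
        = ∏ p : Fin n, ∏ q ∈ Finset.Ioi p,
            (lQ k n (if (p:ℕ)+1 ≤ s then (p:ℕ)+1 else (p:ℕ)+2)
              - lQ k n (if (q:ℕ)+1 ≤ s then (q:ℕ)+1 else (q:ℕ)+2)) := by
      rw [show (∏ i ∈ Finset.Icc 1 n, ∏ j ∈ Finset.Icc (i + 1) n,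
          ((∑ a ∈ Finset.Icc i (j - 1), (mWt k s a : ℚ)) + (j : ℚ) - (i : ℚ)))
        = ∏ i ∈ Finset.Icc 1 n, ∏ j ∈ Finset.Icc (i + 1) n,
            (lQ k n (if i ≤ s then i else i + 1) - lQ k n (if j ≤ s then j else j + 1)) from by
          apply Finset.prod_congr rfl
          intro i hi
          apply Finset.prod_congr rfl
          intro j hj
          rw [Finset.mem_Icc] at hi hj
          exact mfact k n s hi.1 (by omega) hj.2]
      rw [reindexProd n hn1 (fun i j =>
        lQ k n (if i ≤ s then i else i + 1) - lQ k n (if j ≤ s then j else j + 1))]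
    have hsplit : ∏ i ∈ Finset.Icc 1 n, ∏ j ∈ Finset.Icc (i + 1) n,
          ((∑ a ∈ Finset.Icc i (j - 1), (mWt k s a : ℚ))
            + (j : ℚ) - (i : ℚ)) / ((j : ℚ) - (i : ℚ))
        = (∏ i ∈ Finset.Icc 1 n, ∏ j ∈ Finset.Icc (i + 1) n,
          ((∑ a ∈ Finset.Icc i (j - 1), (mWt k s a : ℚ)) + (j : ℚ) - (i : ℚ))) / D n := by
      rw [hDdef]
      simp [Finset.prod_div_distrib]
    rw [hsplit, hnum, hGdef]
    field_simp
  rw [Finset.sum_congr rfl hterm, ← Finset.sum_div]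
  -- G n = 0
  have hGn : G n = 0 := by
    have hlz : lQ k n (n + 1) = ((0:ℕ) : ℚ) := by
      unfold lQ
      rw [Finset.Icc_eq_empty (by omega)]
      simp
    have : P.eval (lQ k n (n+1)) = 0 := by
      rw [hlz, hPdef, descPochhammer_eval_eq_descFactorial,
        Nat.descFactorial_eq_factorial_mul_choose, Nat.choose_eq_zero_of_lt (by omega)]
      simp
    rw [hGdef]
    simp [this]
  have hext : ∑ s ∈ Finset.range n, G s = ∑ s ∈ Finset.range (n+1), G s := by
    rw [Finset.sum_range_succ, hGn, add_zero]
  rw [hext, ← Fin.sum_univ_eq_sum_range G (n+1)]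
  -- identify with key
  have hsA : ∀ (i : Fin (n+1)) (p : Fin n),
      v (i.succAbove p) = lQ k n (if (p:ℕ)+1 ≤ (i:ℕ) then (p:ℕ)+1 else (p:ℕ)+2) := by
    intro i p
    rcases lt_or_ge p.castSucc i with h | h
    · rw [Fin.succAbove_of_castSucc_lt _ _ h]
      have hc : (p:ℕ) < (i:ℕ) := h
      rw [if_pos (by omega)]
      simp [hv]
    · rw [Fin.succAbove_of_le_castSucc _ _ h]
      have hc : (i:ℕ) ≤ (p:ℕ) := h
      rw [if_neg (by omega)]
      simp [hv]
  have hGfin : ∀ i : Fin (n+1), G (i:ℕ)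
      = (-1:ℚ)^(i:ℕ) * P.eval (v i) *
        ∏ p : Fin n, ∏ q ∈ Finset.Ioi p, (v (i.succAbove p) - v (i.succAbove q)) := by
    intro i
    rw [hGdef]
    simp only
    congr 1
    apply Finset.prod_congr rfl
    intro p _
    apply Finset.prod_congr rfl
    intro q _
    rw [hsA i p, hsA i q]
  rw [Finset.sum_congr rfl (fun i _ => hGfin i), key_s10 n P hPM hPd v]
  -- RHS
  have hRHSnum : ∏ i ∈ Finset.Icc 1 (n + 1), ∏ j ∈ Finset.Icc (i + 1) (n + 1),
        ((∑ a ∈ Finset.Icc i (j - 1), (k a : ℚ)) + (j : ℚ) - (i : ℚ))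
      = ∏ p : Fin (n+1), ∏ q ∈ Finset.Ioi p, (v p - v q) := by
    rw [show (∏ i ∈ Finset.Icc 1 (n + 1), ∏ j ∈ Finset.Icc (i + 1) (n + 1),
        ((∑ a ∈ Finset.Icc i (j - 1), (k a : ℚ)) + (j : ℚ) - (i : ℚ)))
      = ∏ i ∈ Finset.Icc 1 (n + 1), ∏ j ∈ Finset.Icc (i + 1) (n + 1),
          (lQ k n i - lQ k n j) from by
        apply Finset.prod_congr rfl
        intro i hi
        apply Finset.prod_congr rfl
        intro j hj
        rw [Finset.mem_Icc] at hi hj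
        exact (lQ_sub k n (by omega) hj.2).symm]
    rw [reindexProd (n+1) (by omega) (fun i j => lQ k n i - lQ k n j)]
  have hRHS : ∏ i ∈ Finset.Icc 1 (n + 1), ∏ j ∈ Finset.Icc (i + 1) (n + 1),
        ((∑ a ∈ Finset.Icc i (j - 1), (k a : ℚ))
          + (j : ℚ) - (i : ℚ)) / ((j : ℚ) - (i : ℚ))
      = (∏ p : Fin (n+1), ∏ q ∈ Finset.Ioi p, (v p - v q)) / D (n+1) := by
    rw [← hRHSnum, hDdef]
    simp [Finset.prod_div_distrib]
  rw [hRHS]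
  -- D (n+1) = D n * n!
  have hDfac : D (n+1) = D n * (n.factorial : ℚ) := by
    rw [hDdef]
    simp only
    rw [Finset.prod_Icc_succ_top (show 1 ≤ n + 1 by omega)]
    rw [Finset.Icc_eq_empty (show ¬ (n+1)+1 ≤ n+1 by omega), Finset.prod_empty, mul_one]
    have hin : ∀ i ∈ Finset.Icc 1 n,
        ∏ j ∈ Finset.Icc (i+1) (n+1), ((j:ℚ) - (i:ℚ))
        = (∏ j ∈ Finset.Icc (i+1) n, ((j:ℚ) - (i:ℚ))) * (((n:ℚ)+1) - (i:ℚ)) := by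
      intro i hi
      rw [Finset.mem_Icc] at hi
      rw [Finset.prod_Icc_succ_top (show i + 1 ≤ n + 1 by omega)]
      push_cast
      ring
    rw [Finset.prod_congr rfl hin, Finset.prod_mul_distrib]
    congr 1
    -- ∏ i ∈ Icc 1 n, (n+1-i) = n !
    have hc : ∀ i ∈ Finset.Icc 1 n, ((n:ℚ)+1) - (i:ℚ) = ((n + 1 - i : ℕ) : ℚ) := by
      intro i hi
      rw [Finset.mem_Icc] at hi
      have : i ≤ n + 1 := by omega
      push_cast [Nat.cast_sub this]
      ring
    rw [Finset.prod_congr rfl hc, ← Nat.cast_prod]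
    congr 1
    have houter : Finset.Icc 1 n = (Finset.range n).map (addRightEmbedding 1) := by
      rw [Finset.range_eq_Ico, Finset.map_add_right_Ico, Finset.Ico_add_one_right_eq_Icc]
    rw [houter, Finset.prod_map]
    have : ∀ x ∈ Finset.range n, (n + 1 - ((addRightEmbedding 1) x) : ℕ) = n - x := by
      intro x hx
      simp [addRightEmbedding]
    rw [Finset.prod_congr rfl this]
    have hrefl : ∏ x ∈ Finset.range n, (n - x) = ∏ x ∈ Finset.range n, (x + 1) := by
      rw [← Finset.prod_range_reflect (fun j => j + 1) n]
      apply Finset.prod_congr rfl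
      intro x hx
      rw [Finset.mem_range] at hx
      omega
    rw [hrefl, Finset.prod_range_add_one_eq_factorial]
  rw [hDfac]
  rw [mul_comm ((n.factorial : ℕ) : ℚ) (D n)]
end

section
/- For all integers 1 ≤ t < s ≤ n and 1 ≤ m ≤ n, the derivation E_{s,t} annihilates D_{n,m}(m); that is, E_{s,t}(D_{n,m}(m)) = 0 in R. -/
open MvPolynomial Finset

noncomputable section

/-- The derivation `E_{s,t} = −∂_{x_{s−1,t}} + ∑_{r=s}^{n} x_{r,s} ∂_{x_{r,t}}` of `R`. -/
def Est (n s t : ℕ) (p : Rpoly) : Rpoly :=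
  -(MvPolynomial.pderiv (s - 1, t) p)
    + ∑ r ∈ Finset.Icc s n, Xv r s * MvPolynomial.pderiv (r, t) p

/-! ### Auxiliary lemmas -/

/-- Product rule for `pderiv` over a finite product. -/
lemma pderiv_finset_prod {ι : Type*} [DecidableEq ι] (v : ℕ × ℕ) (s : Finset ι)
    (f : ι → Rpoly) :
    MvPolynomial.pderiv v (∏ i ∈ s, f i)
      = ∑ j ∈ s, MvPolynomial.pderiv v (f j) * ∏ i ∈ s.erase j, f i := by
  induction s using Finset.induction_on with
  | empty => simp
  | @insert a s ha ih =>
    rw [Finset.prod_insert ha, pderiv_mul, ih, Finset.sum_insert ha,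
      Finset.erase_insert ha, Finset.mul_sum]
    congr 1
    refine Finset.sum_congr rfl fun j hj => ?_
    rw [Finset.erase_insert_of_ne (ne_of_mem_of_not_mem hj ha).symm,
      Finset.prod_insert (fun h => ha (Finset.mem_of_mem_erase h))]
    ring

/-- Derivative of a determinant: sum over columns of the determinant with that
column differentiated. -/
lemma pderiv_det {N : ℕ} (v : ℕ × ℕ) (M : Matrix (Fin N) (Fin N) Rpoly) :
    MvPolynomial.pderiv v M.det
      = ∑ j, (M.updateCol j fun i => MvPolynomial.pderiv v (M i j)).det := by
  have hcol : ∀ (j : Fin N) (c : Fin N → Rpoly),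
      (M.updateCol j c).det
        = ∑ σ : Equiv.Perm (Fin N),
            Equiv.Perm.sign σ • (c (σ j) * ∏ i ∈ Finset.univ.erase j, M (σ i) i) := by
    intro j c
    rw [Matrix.det_apply]
    refine Finset.sum_congr rfl fun σ _ => ?_
    congr 1
    rw [← Finset.mul_prod_erase Finset.univ _ (Finset.mem_univ j)]
    congr 1
    · simp [Matrix.updateCol_apply]
    · refine Finset.prod_congr rfl fun i hi => ?_
      simp [Matrix.updateCol_apply, Finset.ne_of_mem_erase hi]
  rw [Matrix.det_apply, map_sum]
  have h1 : ∀ σ : Equiv.Perm (Fin N),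
      MvPolynomial.pderiv v (Equiv.Perm.sign σ • ∏ i, M (σ i) i)
        = ∑ j, Equiv.Perm.sign σ •
            (MvPolynomial.pderiv v (M (σ j) j) * ∏ i ∈ Finset.univ.erase j, M (σ i) i) := by
    intro σ
    rw [Units.smul_def, map_zsmul, pderiv_finset_prod, Finset.smul_sum]
    refine Finset.sum_congr rfl fun j _ => ?_
    rw [Units.smul_def]
  simp only [h1, hcol]
  exact Finset.sum_comm

lemma pderiv_Xv (v : ℕ × ℕ) (i j : ℕ) :
    MvPolynomial.pderiv v (Xv i j) = if j ≤ i ∧ v = (i, j) then 1 else 0 := by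
  unfold Xv
  by_cases h1 : j ≤ i
  · rw [if_pos h1, pderiv_X, Pi.single_apply]
    by_cases h2 : v = (i, j)
    · rw [if_pos h2.symm, if_pos ⟨h1, h2⟩]
    · rw [if_neg (fun h => h2 h.symm), if_neg (fun h => h2 h.2)]
  · rw [if_neg h1, if_neg (c := j ≤ i ∧ v = (i, j)) (fun h => h1 h.1)]
    split_ifs <;> simp

/-- The determinant with column `j` replaced, as a linear map in the new column. -/
def colDet {N : ℕ} (M : Matrix (Fin N) (Fin N) Rpoly) (j : Fin N) :
    (Fin N → Rpoly) →ₗ[Rpoly] Rpoly where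
  toFun v := (M.updateCol j v).det
  map_add' u v := Matrix.det_updateCol_add M j u v
  map_smul' c v := Matrix.det_updateCol_smul M j c v

/-- Equation (3.24): for `1 ≤ t < s ≤ n` and `1 ≤ m ≤ n`,
the derivation `E_{s,t}` annihilates `D_{n,m}(m)`. -/
theorem stmt13 (n s t m : ℕ) (hn : 2 ≤ n) (ht : 1 ≤ t) (hts : t < s) (hsn : s ≤ n)
    (hm : 1 ≤ m) (hmn : m ≤ n) :
    Est n s t (DPoly n m m) = 0 := by
  set N := n - m + 1 with hN
  set M : Matrix (Fin N) (Fin N) Rpoly :=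
    Matrix.of (fun a b : Fin N => Xv (m + a.1) (m + b.1)) with hMdef
  have hM : DPoly n m m = M.det := by
    unfold DPoly dPoly
    congr 1
    funext a b
    by_cases hb : b.1 = 0 <;> simp [hMdef, hb, ← Fin.val_eq_zero_iff]
  rw [hM]
  by_cases htm : t < m
  · -- the variable column `t` does not occur in the matrix
    have hz : ∀ r : ℕ, MvPolynomial.pderiv (r, t) M.det = 0 := by
      intro r
      rw [pderiv_det]
      refine Finset.sum_eq_zero fun j _ => ?_
      refine Matrix.det_eq_zero_of_column_eq_zero j fun a => ?_
      rw [Matrix.updateCol_self]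
      show MvPolynomial.pderiv (r, t) (Xv (m + a.1) (m + j.1)) = 0
      rw [pderiv_Xv, if_neg]
      rintro ⟨-, h⟩
      have : t = m + j.1 := congrArg Prod.snd h
      omega
    simp [Est, hz]
  · push_neg at htm
    have htn : t ≤ n := le_trans (le_of_lt hts) hsn
    set b0 : Fin N := ⟨t - m, by omega⟩ with hb0
    have hb0v : m + b0.1 = t := by simp [hb0]; omega
    -- differentiating w.r.t. (r, t) with t ≤ r replaces column b0 by an indicator
    have hA : ∀ r : ℕ, t ≤ r →
        MvPolynomial.pderiv (r, t) M.det
          = colDet M b0 (fun a : Fin N => if m + a.1 = r then (1 : Rpoly) else 0) := by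
      intro r hr
      rw [pderiv_det]
      rw [Finset.sum_eq_single b0]
      · have hcoleq : (fun i : Fin N => MvPolynomial.pderiv (r, t) (M i b0))
            = fun a : Fin N => if m + a.1 = r then (1 : Rpoly) else 0 := by
          funext a
          show MvPolynomial.pderiv (r, t) (Xv (m + a.1) (m + b0.1)) = _
          rw [pderiv_Xv, hb0v]
          by_cases hra : m + a.1 = r
          · rw [if_pos ⟨by omega, by rw [hra]⟩, if_pos hra]
          · rw [if_neg, if_neg hra]
            rintro ⟨-, h⟩
            exact hra (congrArg Prod.fst h).symm
        rw [hcoleq]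
        rfl
      · intro j _ hj
        refine Matrix.det_eq_zero_of_column_eq_zero j fun a => ?_
        rw [Matrix.updateCol_self]
        show MvPolynomial.pderiv (r, t) (Xv (m + a.1) (m + j.1)) = 0
        rw [pderiv_Xv, if_neg]
        rintro ⟨-, h⟩
        have h2 : t = m + j.1 := congrArg Prod.snd h
        apply hj
        apply Fin.ext
        simp [hb0]
        omega
      · simp
    have hEst : Est n s t M.det
        = colDet M b0 (-(fun a : Fin N => if m + a.1 = s - 1 then (1 : Rpoly) else 0)
            + ∑ r ∈ Finset.Icc s n,
                Xv r s • (fun a : Fin N => if m + a.1 = r then (1 : Rpoly) else 0)) := by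
      rw [map_add, map_neg, map_sum]
      unfold Est
      rw [hA (s - 1) (by omega)]
      congr 1
      refine Finset.sum_congr rfl fun r hr => ?_
      rw [hA r (by simp only [Finset.mem_Icc] at hr; omega), map_smul, smul_eq_mul]
    rw [hEst]
    have hvec : (-(fun a : Fin N => if m + a.1 = s - 1 then (1 : Rpoly) else 0)
            + ∑ r ∈ Finset.Icc s n,
                Xv r s • (fun a : Fin N => if m + a.1 = r then (1 : Rpoly) else 0))
        = fun a : Fin N => Xv (m + a.1) s := by
      funext a
      have ha : a.1 ≤ n - m := by omega
      simp only [Pi.add_apply, Pi.neg_apply, Finset.sum_apply, Pi.smul_apply, smul_eq_mul]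
      by_cases hs : s ≤ m + a.1
      · rw [Finset.sum_eq_single_of_mem (m + a.1)
          (Finset.mem_Icc.mpr ⟨hs, by omega⟩)
          (fun r _ hr => by rw [if_neg (fun h => hr h.symm), mul_zero]),
          if_pos rfl, mul_one, if_neg (by omega), neg_zero, zero_add]
      · rw [Finset.sum_eq_zero (fun r hr => by
          simp only [Finset.mem_Icc] at hr
          rw [if_neg (by omega), mul_zero]), add_zero]
        unfold Xv
        rw [if_neg hs]
        by_cases h1 : m + a.1 = s - 1
        · rw [if_pos h1, if_pos (by omega)]
        · rw [if_neg h1, if_neg (by omega), neg_zero]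
    rw [hvec]
    -- the new column equals column `s - m` of `M`, so the determinant vanishes
    set c0 : Fin N := ⟨s - m, by omega⟩ with hc0
    have hw : (fun a : Fin N => Xv (m + a.1) s) = fun a => M a c0 := by
      funext a
      show _ = Xv (m + a.1) (m + c0.1)
      congr 1
      simp [hc0]
      omega
    rw [hw]
    exact Matrix.det_updateCol_eq_zero (M := M) (i := c0) (j := b0)
      (fun h => by
        have : c0.1 = b0.1 := congrArg Fin.val h
        simp [hc0, hb0] at this
        omega)

end
end

section
/- For all integers n ≥ 3 and k, r ∈ ℕ, ∑_{s=max(0, r−k)}^{r} (k+2s−r+1)·C(k+s+n−1, n−2)·C(r−s+n−2, n−2)/(n−1) = C(n+r−1, n−1)·C(n+k−1, n−1), as an identity in ℚ. -/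
open Finset

/-- `(a+m+1)·C(a+m,m) = (a+1)·C(a+m+1,m)` in `ℕ`. -/
lemma aux_choose_nat (a m : ℕ) :
    (a + m + 1) * Nat.choose (a + m) m = (a + 1) * Nat.choose (a + m + 1) m := by
  have h1 := Nat.add_one_mul_choose_eq (a + m) m
  have h2 := Nat.choose_succ_right_eq (a + m + 1) m
  have h3 : a + m + 1 - m = a + 1 := by omega
  rw [h3] at h2
  calc (a + m + 1) * Nat.choose (a + m) m
      = Nat.choose (a + m + 1) (m + 1) * (m + 1) := h1
    _ = Nat.choose (a + m + 1) m * (a + 1) := h2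
    _ = (a + 1) * Nat.choose (a + m + 1) m := by ring

/-- Cast version of `aux_choose_nat`. -/
lemma aux_choose (a m : ℕ) :
    ((a : ℚ) + m + 1) * (Nat.choose (a + m) m : ℚ)
      = ((a : ℚ) + 1) * (Nat.choose (a + m + 1) m : ℚ) := by
  exact_mod_cast congrArg (Nat.cast : ℕ → ℚ) (aux_choose_nat a m)

/-- `(m+1)·C(a+m+1,m+1) = (a+m+1)·C(a+m,m)` in `ℚ`. -/
lemma aux_choose2 (a m : ℕ) :
    ((m : ℚ) + 1) * (Nat.choose (a + m + 1) (m + 1) : ℚ)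
      = ((a : ℚ) + m + 1) * (Nat.choose (a + m) m : ℚ) := by
  have h1 := Nat.add_one_mul_choose_eq (a + m) m
  have : ((a + m + 1) * Nat.choose (a + m) m : ℕ)
      = (Nat.choose (a + m + 1) (m + 1) * (m + 1) : ℕ) := h1
  have := congrArg (Nat.cast : ℕ → ℚ) this
  push_cast at this
  linarith

/-- Key identity with `m = n - 2`. -/
lemma key_identity (m k r : ℕ) (hm : 1 ≤ m) :
    ∑ s ∈ Finset.Icc (r - k) r,
      ((k : ℚ) + 2 * (s : ℚ) - (r : ℚ) + 1)
        * (Nat.choose (k + s + m + 1) m : ℚ)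
        * (Nat.choose (r + m - s) m : ℚ) / ((m : ℚ) + 1)
    = (Nat.choose (r + m + 1) (m + 1) : ℚ) * (Nat.choose (k + m + 1) (m + 1) : ℚ) := by
  set g : ℕ → ℚ := fun s =>
    ((s : ℚ) ^ 2 + ((k : ℚ) - r) * s - ((k : ℚ) + m + 1) * ((r : ℚ) + m + 1))
      * (Nat.choose (k + s + m) m : ℚ) * (Nat.choose (r + m - s) m : ℚ)
      / ((m : ℚ) + 1) ^ 2 with hg
  have hm1 : ((m : ℚ) + 1) ≠ 0 := by positivity
  -- telescoping step
  have hstep : ∀ s : ℕ, s ≤ r →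
      ((k : ℚ) + 2 * (s : ℚ) - (r : ℚ) + 1)
        * (Nat.choose (k + s + m + 1) m : ℚ)
        * (Nat.choose (r + m - s) m : ℚ) / ((m : ℚ) + 1)
      = g (s + 1) - g s := by
    intro s hs
    have e1 : ((k : ℚ) + s + m + 1) * (Nat.choose (k + s + m) m : ℚ)
        = ((k : ℚ) + s + 1) * (Nat.choose (k + s + m + 1) m : ℚ) := by
      have := aux_choose (k + s) m
      push_cast at this
      linarith
    have e2 : ((r : ℚ) - s + m) * (Nat.choose (r + m - s - 1) m : ℚ)
        = ((r : ℚ) - s) * (Nat.choose (r + m - s) m : ℚ) := by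
      rcases Nat.lt_or_ge s r with h | h
      · -- s < r : set b = r - s - 1
        obtain ⟨b, hb⟩ : ∃ b, r = s + b + 1 := ⟨r - s - 1, by omega⟩
        subst hb
        have h1 : s + b + 1 + m - s - 1 = b + m := by omega
        have h2 : s + b + 1 + m - s = b + m + 1 := by omega
        rw [h1, h2]
        have := aux_choose b m
        push_cast
        push_cast at this
        linarith
      · -- s = r
        have hsr : s = r := le_antisymm hs h
        subst hsr
        have h1 : s + m - s - 1 = m - 1 := by omega
        have h2 : s + m - s = m := by omega
        rw [h1, h2]
        have : Nat.choose (m - 1) m = 0 := Nat.choose_eq_zero_of_lt (by omega)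
        rw [this]
        simp
    have hknz : ((k : ℚ) + s + m + 1) ≠ 0 := by positivity
    have hrnz : ((r : ℚ) - s + m) ≠ 0 := by
      have : (s : ℚ) ≤ r := by exact_mod_cast hs
      have : (1 : ℚ) ≤ m := by exact_mod_cast hm
      nlinarith
    have eA : (Nat.choose (k + s + m) m : ℚ)
        = ((k : ℚ) + s + 1) * (Nat.choose (k + s + m + 1) m : ℚ) / ((k : ℚ) + s + m + 1) := by
      field_simp
      linarith [e1]
    have eB : (Nat.choose (r + m - s - 1) m : ℚ)
        = ((r : ℚ) - s) * (Nat.choose (r + m - s) m : ℚ) / ((r : ℚ) - s + m) := by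
      field_simp
      linarith [e2]
    have idx1 : k + (s + 1) + m = k + s + m + 1 := by omega
    have idx2 : r + m - (s + 1) = r + m - s - 1 := by omega
    rw [hg]
    simp only [idx1, idx2]
    rw [eA, eB]
    push_cast
    field_simp
    ring
  -- rewrite the sum and telescope
  have hicc : Finset.Icc (r - k) r = Finset.Ico (r - k) (r + 1) := rfl
  rw [hicc]
  rw [Finset.sum_Ico_eq_sum_range]
  have hN : ∀ i ∈ Finset.range (r + 1 - (r - k)), r - k + i ≤ r := by
    intro i hi
    simp only [Finset.mem_range] at hi
    omega
  rw [Finset.sum_congr rfl (fun i hi => hstep (r - k + i) (hN i hi))]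
  have tele : ∑ i ∈ Finset.range (r + 1 - (r - k)), (g (r - k + i + 1) - g (r - k + i))
      = g (r - k + (r + 1 - (r - k))) - g (r - k) := by
    have := Finset.sum_range_sub (fun i => g (r - k + i)) (r + 1 - (r - k))
    simpa [Nat.add_assoc] using this
  rw [tele]
  have hend : r - k + (r + 1 - (r - k)) = r + 1 := by omega
  rw [hend]
  have hg_end : g (r + 1) = 0 := by
    simp only [hg]
    have h1 : r + m - (r + 1) = m - 1 := by omega
    simp only [h1]
    have : Nat.choose (m - 1) m = 0 := Nat.choose_eq_zero_of_lt (by omega)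
    rw [this]
    simp
  rw [hg_end]
  -- evaluate g (r - k)
  have hg_start : g (r - k) = -(((k : ℚ) + m + 1) * ((r : ℚ) + m + 1)
      * (Nat.choose (r + m) m : ℚ) * (Nat.choose (k + m) m : ℚ)) / ((m : ℚ) + 1) ^ 2 := by
    simp only [hg]
    rcases Nat.lt_or_ge r k with h | h
    · have h0 : r - k = 0 := by omega
      rw [h0]
      simp only [Nat.add_zero, Nat.sub_zero, Nat.cast_zero]
      ring
    · have h1 : k + (r - k) + m = r + m := by omega
      have h2 : r + m - (r - k) = k + m := by omega
      have h3 : ((r - k : ℕ) : ℚ) = (r : ℚ) - k := by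
        push_cast [Nat.cast_sub h]
        ring
      rw [h1, h2, h3]
      ring
  rw [hg_start]
  -- final: ((k+m+1)(r+m+1) C(r+m,m) C(k+m,m))/(m+1)^2 = C(r+m+1,m+1) C(k+m+1,m+1)
  have c1 := aux_choose2 r m
  have c2 := aux_choose2 k m
  have c3 : (((m:ℚ)+1) * (Nat.choose (r+m+1) (m+1) : ℚ))
      * (((m:ℚ)+1) * (Nat.choose (k+m+1) (m+1) : ℚ))
      = (((r:ℚ)+m+1) * (Nat.choose (r+m) m : ℚ))
      * (((k:ℚ)+m+1) * (Nat.choose (k+m) m : ℚ)) := by rw [c1, c2]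
  rw [zero_sub, neg_div, neg_neg, div_eq_iff (by positivity : ((m:ℚ)+1)^2 ≠ 0)]
  linear_combination -c3

/-- Identity (4.15): for `n ≥ 3` and `k, r ∈ ℕ`,
`∑_{s=max(0,r−k)}^{r} (k+2s−r+1)·C(k+s+n−1, n−2)·C(r−s+n−2, n−2)/(n−1)
  = C(n+r−1, n−1)·C(n+k−1, n−1)` in `ℚ`. -/
theorem stmt15 (n k r : ℕ) (hn : 3 ≤ n) :
    ∑ s ∈ Finset.Icc (max 0 (r - k)) r,
      ((k : ℚ) + 2 * (s : ℚ) - (r : ℚ) + 1)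
        * (Nat.choose (k + s + n - 1) (n - 2) : ℚ)
        * (Nat.choose (r - s + n - 2) (n - 2) : ℚ) / ((n : ℚ) - 1)
    = (Nat.choose (n + r - 1) (n - 1) : ℚ) * (Nat.choose (n + k - 1) (n - 1) : ℚ) := by
  obtain ⟨m, hm1, rfl⟩ : ∃ m, 1 ≤ m ∧ n = m + 2 := ⟨n - 2, by omega, by omega⟩
  have hmax : max 0 (r - k) = r - k := Nat.zero_max _
  have hcast : ((m + 2 : ℕ) : ℚ) - 1 = (m : ℚ) + 1 := by push_cast; ring
  have key := key_identity m k r hm1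
  have e1 : m + 2 - 2 = m := by omega
  have e2 : m + 2 + r - 1 = r + m + 1 := by omega
  have e3 : m + 2 + k - 1 = k + m + 1 := by omega
  have e4 : m + 2 - 1 = m + 1 := by omega
  rw [hmax, hcast, e1, e2, e3, e4]
  rw [← key]
  apply Finset.sum_congr rfl
  intro s hs
  simp only [Finset.mem_Icc] at hs
  have i1 : k + s + (m + 2) - 1 = k + s + m + 1 := by omega
  have i2 : r - s + (m + 2) - 2 = r + m - s := by omega
  rw [i1, i2]
end

section
/- For all integers n ≥ 2 and k, r ∈ ℕ, ∑_{s=max(0, r−k)}^{r} (k+2s−r+n−1)·C(s+n−2, n−2)·C(k+s−r+n−2, n−2)/(n−1) = C(n+r−1, n−1)·C(n+k−1, n−1), as an identity in ℚ. -/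
open Finset

lemma aux1 (p a : ℕ) : (p+1) * Nat.choose (a+p+1) (p+1) = (a+p+1) * Nat.choose (a+p) p := by
  have h := Nat.add_one_mul_choose_eq (a+p) p
  linarith [h]

lemma aux2 (p b : ℕ) : (p+1) * Nat.choose (b+p) (p+1) = b * Nat.choose (b+p) p := by
  have h := Nat.add_one_mul_choose_eq (b+p) p
  rw [Nat.choose_succ_succ] at h
  nlinarith [h]

lemma key_s16 (p : ℕ) : ∀ r k : ℕ,
    ∑ s ∈ Finset.Icc (r - k) r,
      (Nat.choose (s+p+1) (p+1) * Nat.choose (k+s-r+p) p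
        + Nat.choose (s+p) p * Nat.choose (k+s-r+p) (p+1))
    = Nat.choose (r+p+1) (p+1) * Nat.choose (k+p+1) (p+1) := by
  intro r
  induction r with
  | zero =>
      intro k
      simp [Nat.choose_succ_succ (k+p) p]
  | succ r ih =>
      intro k
      have hsplit : Finset.Icc (r+1-k) (r+1) = insert (r+1) (Finset.Icc (r+1-k) r) := by
        ext x; simp [Finset.mem_Icc]; omega
      rw [hsplit, Finset.sum_insert (by simp)]
      rcases k with _ | k'
      · rw [Finset.Icc_eq_empty (by omega)]
        simp [Nat.choose_succ_self]
      · have hsum : ∑ s ∈ Finset.Icc (r+1-(k'+1)) r,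
            (Nat.choose (s+p+1) (p+1) * Nat.choose ((k'+1)+s-(r+1)+p) p
              + Nat.choose (s+p) p * Nat.choose ((k'+1)+s-(r+1)+p) (p+1))
            = Nat.choose (r+p+1) (p+1) * Nat.choose (k'+p+1) (p+1) := by
          rw [show r+1-(k'+1) = r - k' by omega]
          rw [← ih k']
          apply Finset.sum_congr rfl
          intro s hs
          have : (k'+1)+s-(r+1) = k'+s-r := by omega
          rw [this]
        rw [hsum]
        have h1 : (k'+1)+(r+1)-(r+1) = k' + 1 := by omega
        rw [h1]
        have h2 : Nat.choose (k'+1+p+1) (p+1) = Nat.choose (k'+p+1) p + Nat.choose (k'+p+1) (p+1) := by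
          rw [show k'+1+p+1 = (k'+p+1)+1 by ring, Nat.choose_succ_succ]
        have h3 : Nat.choose (r+1+p+1) (p+1) = Nat.choose (r+p+1) p + Nat.choose (r+p+1) (p+1) := by
          rw [show r+1+p+1 = (r+p+1)+1 by ring, Nat.choose_succ_succ]
        have h4 : k'+1+p = k'+p+1 := by ring
        simp only [show r+1+p+1 = (r+p+1)+1 from by ring, show r+1+p = r+p+1 from by ring,
          show k'+1+p = k'+p+1 from by ring, show k'+p+1+1 = (k'+p+1)+1 from by ring,
          Nat.choose_succ_succ]
        ring

/-- Identity (4.23): for `n ≥ 2` and `k, r ∈ ℕ`,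
`∑_{s=max(0,r−k)}^{r} (k+2s−r+n−1)·C(s+n−2, n−2)·C(k+s−r+n−2, n−2)/(n−1)
  = C(n+r−1, n−1)·C(n+k−1, n−1)` in `ℚ`. -/
theorem stmt16 (n k r : ℕ) (hn : 2 ≤ n) :
    ∑ s ∈ Finset.Icc (max 0 (r - k)) r,
      ((k : ℚ) + 2 * (s : ℚ) - (r : ℚ) + (n : ℚ) - 1)
        * (Nat.choose (s + n - 2) (n - 2) : ℚ)
        * (Nat.choose (k + s - r + n - 2) (n - 2) : ℚ) / ((n : ℚ) - 1)
    = (Nat.choose (n + r - 1) (n - 1) : ℚ) * (Nat.choose (n + k - 1) (n - 1) : ℚ) := by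
  obtain ⟨p, rfl⟩ : ∃ p, n = p + 2 := ⟨n - 2, by omega⟩
  have hmax : max 0 (r - k) = r - k := by omega
  rw [hmax]
  have hstep : ∀ s ∈ Finset.Icc (r - k) r,
      ((k : ℚ) + 2 * (s : ℚ) - (r : ℚ) + ((p+2 : ℕ) : ℚ) - 1)
        * (Nat.choose (s + (p+2) - 2) ((p+2) - 2) : ℚ)
        * (Nat.choose (k + s - r + (p+2) - 2) ((p+2) - 2) : ℚ) / (((p+2 : ℕ) : ℚ) - 1)
      = ((Nat.choose (s+p+1) (p+1) * Nat.choose (k+s-r+p) p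
        + Nat.choose (s+p) p * Nat.choose (k+s-r+p) (p+1) : ℕ) : ℚ) := by
    intro s hs
    simp only [Finset.mem_Icc] at hs
    have hrs : r ≤ k + s := by omega
    set b := k + s - r with hbdef
    have hb : (b : ℚ) = (k : ℚ) + s - r := by
      rw [hbdef]
      push_cast [Nat.cast_sub hrs]
      ring
    have e1 : s + (p+2) - 2 = s + p := by omega
    have e2 : (p+2) - 2 = p := by omega
    have e3 : k + s - r + (p+2) - 2 = b + p := by omega
    rw [e1, e2, e3]
    have hne : ((((p:ℕ)+2 : ℕ)):ℚ) - 1 ≠ 0 := by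
      push_cast
      rw [show ((p:ℚ)+2)-1 = (p:ℚ)+1 from by ring]
      positivity
    rw [div_eq_iff hne]
    have c1 := aux1 p s
    have c2 := aux2 p b
    have c1' : ((p:ℚ)+1) * (Nat.choose (s+p+1) (p+1) : ℚ) = ((s:ℚ)+p+1) * (Nat.choose (s+p) p : ℚ) := by
      exact_mod_cast congrArg (Nat.cast : ℕ → ℚ) c1
    have c2' : ((p:ℚ)+1) * (Nat.choose (b+p) (p+1) : ℚ) = (b:ℚ) * (Nat.choose (b+p) p : ℚ) := by
      exact_mod_cast congrArg (Nat.cast : ℕ → ℚ) c2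
    push_cast
    linear_combination ((Nat.choose (s+p) p : ℚ) * (Nat.choose (b+p) p : ℚ)) * hb.symm
      - (Nat.choose (b+p) p : ℚ) * c1' - (Nat.choose (s+p) p : ℚ) * c2'
  rw [Finset.sum_congr rfl hstep, ← Nat.cast_sum, key_s16 p r k]
  have e4 : p + 2 + r - 1 = r + p + 1 := by omega
  have e5 : p + 2 - 1 = p + 1 := by omega
  have e6 : p + 2 + k - 1 = k + p + 1 := by omega
  rw [e4, e5, e6]
  push_cast
  ring
end

section
/- For all integers n ≥ 2, k₁, k ∈ ℕ, and r ∈ ℕ with k₁+1 ≤ r ≤ k₁+k, ∑_{s=max(0, r−k)}^{k₁} (k+2s−r+n−1)·C(s+n−2, n−2)·C(k+s−r+n−2, n−2)/(n−1) = C(k₁+n−1, n−1)·C(k₁+k−r+n−1, n−1), as an identity in ℚ. -/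
open Finset

lemma tele_Icc (F : ℕ → ℚ) (a b : ℕ) (h : a ≤ b) :
    ∑ s ∈ Finset.Icc a b, (F (s + 1) - F s) = F (b + 1) - F a := by
  induction b, h using Nat.le_induction with
  | base => simp
  | succ b hb ih =>
      rw [Finset.sum_Icc_succ_top (by omega), ih]
      ring

/-- Identity (4.28): for `n ≥ 2`, `k₁, k ∈ ℕ` and `k₁+1 ≤ r ≤ k₁+k`,
`∑_{s=max(0,r−k)}^{k₁} (k+2s−r+n−1)·C(s+n−2, n−2)·C(k+s−r+n−2, n−2)/(n−1)
  = C(k₁+n−1, n−1)·C(k₁+k−r+n−1, n−1)` in `ℚ`. -/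
theorem stmt17 (n k₁ k r : ℕ) (hn : 2 ≤ n) (hr1 : k₁ + 1 ≤ r) (hr2 : r ≤ k₁ + k) :
    ∑ s ∈ Finset.Icc (max 0 (r - k)) k₁,
      ((k : ℚ) + 2 * (s : ℚ) - (r : ℚ) + (n : ℚ) - 1)
        * (Nat.choose (s + n - 2) (n - 2) : ℚ)
        * (Nat.choose (k + s - r + n - 2) (n - 2) : ℚ) / ((n : ℚ) - 1)
    = (Nat.choose (k₁ + n - 1) (n - 1) : ℚ) * (Nat.choose (k₁ + k - r + n - 1) (n - 1) : ℚ) := by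
  obtain ⟨d, rfl⟩ : ∃ d, n = d + 2 := ⟨n - 2, by omega⟩
  have hd : ((d : ℚ) + 1) ≠ 0 := by positivity
  set F : ℕ → ℚ := fun s =>
    ((s + d).choose (d + 1) : ℚ) * ((k + s - r + d).choose (d + 1) : ℚ) with hF
  have hmax : max 0 (r - k) = r - k := by omega
  have hle : r - k ≤ k₁ := by omega
  have hterm : ∀ s ∈ Finset.Icc (r - k) k₁,
      ((k : ℚ) + 2 * (s : ℚ) - (r : ℚ) + ((d + 2 : ℕ) : ℚ) - 1)
        * (Nat.choose (s + (d + 2) - 2) ((d + 2) - 2) : ℚ)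
        * (Nat.choose (k + s - r + (d + 2) - 2) ((d + 2) - 2) : ℚ) / (((d + 2 : ℕ) : ℚ) - 1)
      = F (s + 1) - F s := by
    intro s hs
    simp only [Finset.mem_Icc] at hs
    obtain ⟨b, hb⟩ : ∃ b, k + s = r + b := ⟨k + s - r, by omega⟩
    have e1 : k + s - r = b := by omega
    have e2 : k + (s + 1) - r = b + 1 := by omega
    have e3 : s + (d + 2) - 2 = s + d := by omega
    have e4 : b + (d + 2) - 2 = b + d := by omega
    have hbq : (k : ℚ) + s = r + b := by exact_mod_cast congrArg (Nat.cast : ℕ → ℚ) hb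
    have h1 : ((s + d + 1).choose (d + 1) : ℚ) * ((d : ℚ) + 1)
        = ((s + d).choose d : ℚ) * ((s : ℚ) + d + 1) := by
      have := Nat.add_one_mul_choose_eq (s + d) d
      have : ((s + d + 1) * (s + d).choose d : ℚ) = ((s + d + 1).choose (d + 1) * (d + 1) : ℚ) := by
        exact_mod_cast congrArg (Nat.cast : ℕ → ℚ) this
      push_cast at this ⊢; linarith
    have h2 : ((s + d).choose (d + 1) : ℚ) * ((d : ℚ) + 1)
        = ((s + d).choose d : ℚ) * (s : ℚ) := by
      have := Nat.choose_succ_right_eq (s + d) d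
      rw [Nat.add_sub_cancel] at this
      exact_mod_cast congrArg (Nat.cast : ℕ → ℚ) this
    have h3 : ((b + d + 1).choose (d + 1) : ℚ) * ((d : ℚ) + 1)
        = ((b + d).choose d : ℚ) * ((b : ℚ) + d + 1) := by
      have := Nat.add_one_mul_choose_eq (b + d) d
      have : ((b + d + 1) * (b + d).choose d : ℚ) = ((b + d + 1).choose (d + 1) * (d + 1) : ℚ) := by
        exact_mod_cast congrArg (Nat.cast : ℕ → ℚ) this
      push_cast at this ⊢; linarith
    have h4 : ((b + d).choose (d + 1) : ℚ) * ((d : ℚ) + 1)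
        = ((b + d).choose d : ℚ) * (b : ℚ) := by
      have := Nat.choose_succ_right_eq (b + d) d
      rw [Nat.add_sub_cancel] at this
      exact_mod_cast congrArg (Nat.cast : ℕ → ℚ) this
    have e0 : d + 2 - 2 = d := by omega
    rw [hF]
    simp only [e0, e1, e2, e3, e4]
    have e5 : s + 1 + d = s + d + 1 := by ring
    have e6 : b + 1 + d = b + d + 1 := by ring
    rw [e5, e6]
    have hcoef : (k : ℚ) + 2 * s - r + ((d + 2 : ℕ) : ℚ) - 1 = (s : ℚ) + b + d + 1 := by
      push_cast; linarith
    rw [hcoef]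
    rw [show (((d + 2 : ℕ) : ℚ) - 1) = (d : ℚ) + 1 from by push_cast; ring, div_eq_iff hd]
    apply mul_right_cancel₀ hd
    linear_combination -(((b + d + 1).choose (d + 1) : ℚ) * ((d : ℚ) + 1)) * h1
      - (((s + d).choose d : ℚ) * ((s : ℚ) + (d : ℚ) + 1)) * h3
      + (((b + d).choose (d + 1) : ℚ) * ((d : ℚ) + 1)) * h2
      + (((s + d).choose d : ℚ) * (s : ℚ)) * h4
  rw [hmax, Finset.sum_congr rfl hterm, tele_Icc F _ _ hle]
  have hF0 : F (r - k) = 0 := by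
    rcases le_or_gt r k with h | h
    · have : r - k = 0 := by omega
      rw [hF]; simp only [this]
      simp [Nat.choose_eq_zero_of_lt (show d < d + 1 by omega)]
    · have e : k + (r - k) - r = 0 := by omega
      rw [hF]; simp only [e]
      simp [Nat.choose_eq_zero_of_lt (show d < d + 1 by omega)]
  rw [hF0, sub_zero, hF]
  have e7 : k + (k₁ + 1) - r + d = k₁ + k - r + (d + 2) - 1 := by omega
  have e8 : k₁ + 1 + d = k₁ + (d + 2) - 1 := by omega
  have e9 : d + 1 = d + 2 - 1 := by omega
  show ((k₁ + 1 + d).choose (d + 1) : ℚ) * ((k + (k₁ + 1) - r + d).choose (d + 1) : ℚ) = _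
  rw [e7, e8, e9]
end

section
/- For all integers n ≥ 2 and k₁, k₂ ∈ ℕ, ∏_{1≤i<j≤n+1} ((κ_{i,j} + j − i)/(j − i)) = C(k₁+k₂+n, n)·C(k₂+n−1, n−1) − C(k₂+n−1, n)·C(k₁+k₂+n, n−1), as an identity in ℚ, where κ_{i,j} = ∑_{r=i}^{j−1} κ_r with κ_1 = k₁, κ_2 = k₂, and κ_r = 0 for r ≥ 3 (so κ_{1,2} = k₁, κ_{1,j} = k₁+k₂ for j ≥ 3, κ_{2,j} = k₂ for j ≥ 3, and κ_{i,j} = 0 for i ≥ 3). -/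
open Finset

/-- The highest weight `κ` with `κ₁ = k₁`, `κ₂ = k₂`, and `κ_r = 0` for `r ≥ 3`. -/
def κWt (k₁ k₂ : ℕ) (r : ℕ) : ℕ :=
  if r = 1 then k₁ else if r = 2 then k₂ else 0

lemma key1 (a N : ℕ) :
    ∏ m ∈ Finset.range N, (((a : ℚ) + (m + 1)) / (m + 1)) = (Nat.choose (a + N) N : ℚ) := by
  induction N with
  | zero => simp
  | succ N ih =>
    rw [Finset.prod_range_succ, ih]
    have hN : ((N : ℚ) + 1) ≠ 0 := by positivity
    have h' : ((a : ℚ) + N + 1) * (Nat.choose (a + N) N : ℚ)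
        = (Nat.choose (a + N + 1) (N + 1) : ℚ) * ((N : ℚ) + 1) := by
      exact_mod_cast Nat.add_one_mul_choose_eq (a + N) N
    rw [show a + (N + 1) = a + N + 1 by ring, ← mul_div_assoc, div_eq_iff hN]
    linear_combination h'

lemma key2 (a N : ℕ) :
    ∏ m ∈ Finset.range N, (((a : ℚ) + (m + 2)) / (m + 2))
      = (Nat.choose (a + N + 1) (N + 1) : ℚ) / (a + 1) := by
  have ha : ((a : ℚ) + 1) ≠ 0 := by positivity
  induction N with
  | zero =>
    simp [Nat.choose_one_right]
    rw [div_self ha]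
  | succ N ih =>
    rw [Finset.prod_range_succ, ih, show a + (N + 1) + 1 = a + N + 2 by ring,
      show N + 1 + 1 = N + 2 by ring]
    have hN : ((N : ℚ) + 2) ≠ 0 := by positivity
    have h' : ((a : ℚ) + N + 2) * (Nat.choose (a + N + 1) (N + 1) : ℚ)
        = (Nat.choose (a + N + 2) (N + 2) : ℚ) * ((N : ℚ) + 2) := by
      exact_mod_cast Nat.add_one_mul_choose_eq (a + N + 1) (N + 1)
    rw [div_mul_div_comm, div_eq_div_iff (by positivity) ha]
    push_cast at h' ⊢
    linear_combination ((a : ℚ) + 1) * h'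

lemma sumtail (k₁ k₂ M : ℕ) : ∑ r ∈ Finset.Icc 3 M, (κWt k₁ k₂ r : ℚ) = 0 := by
  apply Finset.sum_eq_zero
  intro r hr
  simp only [Finset.mem_Icc] at hr
  simp only [κWt]
  rw [if_neg (by omega), if_neg (by omega)]
  simp

lemma sumlem1 (k₁ k₂ M : ℕ) (hM : 2 ≤ M) :
    ∑ r ∈ Finset.Icc 1 M, (κWt k₁ k₂ r : ℚ) = k₁ + k₂ := by
  have h : Finset.Icc 1 M = insert 1 (insert 2 (Finset.Icc 3 M)) := by
    ext x; simp only [Finset.mem_Icc, Finset.mem_insert]; omega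
  rw [h, Finset.sum_insert (by simp), Finset.sum_insert (by simp), sumtail]
  simp [κWt]

lemma sumlem2 (k₁ k₂ M : ℕ) (hM : 2 ≤ M) :
    ∑ r ∈ Finset.Icc 2 M, (κWt k₁ k₂ r : ℚ) = k₂ := by
  have h : Finset.Icc 2 M = insert 2 (Finset.Icc 3 M) := by
    ext x; simp only [Finset.mem_Icc, Finset.mem_insert]; omega
  rw [h, Finset.sum_insert (by simp), sumtail]
  simp [κWt]

/-- Identity (4.18): for `n ≥ 2` and `k₁, k₂ ∈ ℕ`, Weyl's dimension formula for the
irreducible `sl(n+1)`-module with highest weight `k₁λ₁ + k₂λ₂` equals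
`C(k₁+k₂+n, n)·C(k₂+n−1, n−1) − C(k₂+n−1, n)·C(k₁+k₂+n, n−1)` in `ℚ`. -/
theorem stmt19 (n k₁ k₂ : ℕ) (hn : 2 ≤ n) :
    ∏ i ∈ Finset.Icc 1 (n + 1), ∏ j ∈ Finset.Icc (i + 1) (n + 1),
      ((∑ r ∈ Finset.Icc i (j - 1), (κWt k₁ k₂ r : ℚ))
        + (j : ℚ) - (i : ℚ)) / ((j : ℚ) - (i : ℚ))
    = (Nat.choose (k₁ + k₂ + n) n : ℚ) * (Nat.choose (k₂ + n - 1) (n - 1) : ℚ)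
      - (Nat.choose (k₂ + n - 1) n : ℚ) * (Nat.choose (k₁ + k₂ + n) (n - 1) : ℚ) := by
  obtain ⟨p, rfl⟩ : ∃ p, n = p + 2 := ⟨n - 2, by omega⟩
  clear hn
  have hsplit : Finset.Icc 1 (p + 2 + 1) = insert 1 (insert 2 (Finset.Icc 3 (p + 3))) := by
    ext x; simp only [Finset.mem_Icc, Finset.mem_insert]; omega
  rw [hsplit, Finset.prod_insert (by simp), Finset.prod_insert (by simp)]
  -- tail product is 1
  have htail : ∏ i ∈ Finset.Icc 3 (p + 3), ∏ j ∈ Finset.Icc (i + 1) (p + 2 + 1),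
      ((∑ r ∈ Finset.Icc i (j - 1), (κWt k₁ k₂ r : ℚ))
        + (j : ℚ) - (i : ℚ)) / ((j : ℚ) - (i : ℚ)) = 1 := by
    apply Finset.prod_eq_one
    intro i hi
    simp only [Finset.mem_Icc] at hi
    apply Finset.prod_eq_one
    intro j hj
    simp only [Finset.mem_Icc] at hj
    have hz : ∑ r ∈ Finset.Icc i (j - 1), (κWt k₁ k₂ r : ℚ) = 0 := by
      apply Finset.sum_eq_zero
      intro r hr
      simp only [Finset.mem_Icc] at hr
      simp only [κWt]
      rw [if_neg (by omega), if_neg (by omega)]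
      simp
    rw [hz]
    have : (i : ℚ) < (j : ℚ) := by exact_mod_cast (by omega : i < j)
    rw [zero_add]
    exact div_self (by linarith)
  rw [htail, mul_one]
  -- i = 1 term
  have h1split : Finset.Icc (1 + 1) (p + 2 + 1) = insert 2 (Finset.Icc 3 (p + 3)) := by
    ext x; simp only [Finset.mem_Icc, Finset.mem_insert]; omega
  have h2split : Finset.Icc (2 + 1) (p + 2 + 1) = Finset.Icc 3 (p + 3) := by
    norm_num
  rw [h1split, h2split, Finset.prod_insert (by simp)]
  -- j = 2 factor of the i = 1 product
  have hj2 : ((∑ r ∈ Finset.Icc 1 (2 - 1), (κWt k₁ k₂ r : ℚ))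
      + ((2 : ℕ) : ℚ) - ((1 : ℕ) : ℚ)) / (((2 : ℕ) : ℚ) - ((1 : ℕ) : ℚ)) = (k₁ : ℚ) + 1 := by
    norm_num [κWt]
    ring
  rw [hj2]
  -- i = 1, j ≥ 3 product
  have hP1 : ∏ j ∈ Finset.Icc 3 (p + 3),
      ((∑ r ∈ Finset.Icc 1 (j - 1), (κWt k₁ k₂ r : ℚ))
        + (j : ℚ) - ((1 : ℕ) : ℚ)) / ((j : ℚ) - ((1 : ℕ) : ℚ))
      = (Nat.choose (k₁ + k₂ + (p + 2)) (p + 2) : ℚ) / ((k₁ : ℚ) + (k₂ : ℚ) + 1) := by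
    rw [← Finset.Ico_add_one_right_eq_Icc, Finset.prod_Ico_eq_prod_range]
    have : p + 3 + 1 - 3 = p + 1 := by omega
    rw [this]
    have heq : ∀ m ∈ Finset.range (p + 1),
        ((∑ r ∈ Finset.Icc 1 (3 + m - 1), (κWt k₁ k₂ r : ℚ))
          + ((3 + m : ℕ) : ℚ) - ((1 : ℕ) : ℚ)) / (((3 + m : ℕ) : ℚ) - ((1 : ℕ) : ℚ))
        = (((k₁ + k₂ : ℕ) : ℚ) + ((m : ℚ) + 2)) / ((m : ℚ) + 2) := by
      intro m _
      rw [show 3 + m - 1 = m + 2 by omega, sumlem1 k₁ k₂ (m + 2) (by omega)]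
      push_cast
      ring_nf
    rw [Finset.prod_congr rfl heq, key2 (k₁ + k₂) (p + 1)]
    push_cast
    rw [show k₁ + k₂ + (p + 1) + 1 = k₁ + k₂ + (p + 2) by omega]
  -- i = 2 product
  have hP2 : ∏ j ∈ Finset.Icc 3 (p + 3),
      ((∑ r ∈ Finset.Icc 2 (j - 1), (κWt k₁ k₂ r : ℚ))
        + (j : ℚ) - ((2 : ℕ) : ℚ)) / ((j : ℚ) - ((2 : ℕ) : ℚ))
      = (Nat.choose (k₂ + (p + 1)) (p + 1) : ℚ) := by
    rw [← Finset.Ico_add_one_right_eq_Icc, Finset.prod_Ico_eq_prod_range]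
    have : p + 3 + 1 - 3 = p + 1 := by omega
    rw [this]
    have heq : ∀ m ∈ Finset.range (p + 1),
        ((∑ r ∈ Finset.Icc 2 (3 + m - 1), (κWt k₁ k₂ r : ℚ))
          + ((3 + m : ℕ) : ℚ) - ((2 : ℕ) : ℚ)) / (((3 + m : ℕ) : ℚ) - ((2 : ℕ) : ℚ))
        = (((k₂ : ℕ) : ℚ) + ((m : ℚ) + 1)) / ((m : ℚ) + 1) := by
      intro m _
      rw [show 3 + m - 1 = m + 2 by omega, sumlem2 k₁ k₂ (m + 2) (by omega)]
      push_cast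
      ring_nf
    rw [Finset.prod_congr rfl heq, key1 k₂ (p + 1)]
  rw [hP1, hP2]
  -- final arithmetic
  have e1 := Nat.choose_succ_right_eq (k₂ + (p + 2) - 1) (p + 1)
  have e2 := Nat.choose_succ_right_eq (k₁ + k₂ + (p + 2)) (p + 1)
  rw [show k₂ + (p + 2) - 1 - (p + 1) = k₂ by omega] at e1
  rw [show k₁ + k₂ + (p + 2) - (p + 1) = k₁ + k₂ + 1 by omega] at e2
  have e1' : ((Nat.choose (k₂ + (p + 2) - 1) (p + 2) : ℚ) * (p + 2)
      = (Nat.choose (k₂ + (p + 2) - 1) (p + 1) : ℚ) * k₂) := by exact_mod_cast e1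
  have e2' : ((Nat.choose (k₁ + k₂ + (p + 2)) (p + 2) : ℚ) * (p + 2)
      = (Nat.choose (k₁ + k₂ + (p + 2)) (p + 1) : ℚ) * (k₁ + k₂ + 1)) := by
    exact_mod_cast e2
  rw [show k₂ + (p + 2) - 1 = k₂ + (p + 1) by omega] at e1' ⊢
  rw [show p + 2 - 1 = p + 1 from rfl]
  have ha : (k₁ : ℚ) + (k₂ : ℚ) + 1 ≠ 0 := by positivity
  have hp2 : ((p : ℚ) + 2) ≠ 0 := by positivity
  have hB' : (Nat.choose (k₂ + (p + 1)) (p + 2) : ℚ)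
      = (Nat.choose (k₂ + (p + 1)) (p + 1) : ℚ) * k₂ / ((p : ℚ) + 2) := by
    rw [eq_div_iff hp2]
    linear_combination e1'
  have hA' : (Nat.choose (k₁ + k₂ + (p + 2)) (p + 1) : ℚ)
      = (Nat.choose (k₁ + k₂ + (p + 2)) (p + 2) : ℚ) * ((p : ℚ) + 2)
        / ((k₁ : ℚ) + k₂ + 1) := by
    rw [eq_div_iff ha]
    linear_combination -e2'
  rw [hB', hA']
  field_simp
  ring
end
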